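/- arXiv:2206.04387 — 9 statements merged into one kernel-verified Lean document; each statement's English description precedes it below -/
import Mathlib

section
/- For every graph G, the treewidth of G is at most the bridge-depth of G, and the bridge-depth of G is at most the elimination distance of G to a forest plus 1: tw(G) ≤ bd(G) ≤ ed_{𝒢F}(G) + 1. -/
/-- `ElimLE G Base A k` holds iff the elimination distance of `G[A]` to the class of
graphs described by the base predicate `Base` is at most `k`: either the base predicate
already holds, or from each connected component one vertex can be deleted so that the
remainder has elimination distance at most `k - 1`. -/
inductive ElimLE {V : Type} (G : SimpleGraph V) (Base : Set V → Prop) : Set V → ℕ → Prop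
  | base (A : Set V) (k : ℕ) (h : Base A) : ElimLE G Base A k
  | step (A : Set V) (k : ℕ)
      (v : (G.induce A).ConnectedComponent → ↥A)
      (hv : ∀ C : (G.induce A).ConnectedComponent, v C ∈ C.supp)
      (h : ∀ C : (G.induce A).ConnectedComponent,
        ElimLE G Base ((Subtype.val '' C.supp) \ {(v C).val}) k) :
      ElimLE G Base A (k + 1)

/-- The elimination distance of `G` to a forest. -/
noncomputable def edForest {V : Type} (G : SimpleGraph V) : ℕ :=
  sInf {k | ElimLE G (fun A => (G.induce A).IsAcyclic) Set.univ k}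
/-- `G` has a tree decomposition of width at most `k`: a tree `R` with bags covering all
vertices and edges of `G`, such that the nodes whose bag contains any fixed vertex induce
a subtree, and every bag has at most `k + 1` vertices. -/
def HasTreeDecompWidthLE {V : Type} (G : SimpleGraph V) (k : ℕ) : Prop :=
  ∃ (ι : Type) (_ : Fintype ι) (R : SimpleGraph ι) (B : ι → Set V),
    R.Connected ∧ R.IsAcyclic ∧
    (∀ v : V, ∃ i : ι, v ∈ B i) ∧
    (∀ v w : V, G.Adj v w → ∃ i : ι, v ∈ B i ∧ w ∈ B i) ∧
    (∀ v : V, (R.induce {i : ι | v ∈ B i}).Connected) ∧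
    (∀ i : ι, (B i).ncard ≤ k + 1)

/-- The treewidth of `G`. -/
noncomputable def treewidth {V : Type} (G : SimpleGraph V) : ℕ :=
  sInf {k | HasTreeDecompWidthLE G k}
/-- `BridgeDepthLE G A k` holds iff the bridge-depth of `G[A]` is at most `k`: either
`A` is empty, or from each connected component one can delete a tree of bridges (a
nonempty connected induced subgraph all of whose edges are bridges of the component)
so that the remainder has bridge-depth at most `k - 1`. -/
inductive BridgeDepthLE {V : Type} (G : SimpleGraph V) : Set V → ℕ → Prop
  | empty (k : ℕ) : BridgeDepthLE G ∅ k
  | step (A : Set V) (k : ℕ)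
      (S : (G.induce A).ConnectedComponent → Set V)
      (hS : ∀ C : (G.induce A).ConnectedComponent, S C ⊆ Subtype.val '' C.supp)
      (hconn : ∀ C : (G.induce A).ConnectedComponent, (G.induce (S C)).Connected)
      (hbr : ∀ (C : (G.induce A).ConnectedComponent) (x y : V)
        (hx : x ∈ S C) (hy : y ∈ S C), G.Adj x y →
        (G.induce (Subtype.val '' C.supp)).IsBridge s(⟨x, hS C hx⟩, ⟨y, hS C hy⟩))
      (h : ∀ C : (G.induce A).ConnectedComponent,
        BridgeDepthLE G ((Subtype.val '' C.supp) \ S C) k) :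
      BridgeDepthLE G A (k + 1)

/-- The bridge-depth of `G`. -/
noncomputable def bridgeDepth {V : Type} (G : SimpleGraph V) : ℕ :=
  sInf {k | BridgeDepthLE G Set.univ k}

/-!
`tw ≤ bd`: follow the recursive definition of bridge-depth, building for every component a tree
decomposition whose tree is given by parent pointers. If `S` is a tree of bridges of a component
`W`, every component `D` of `W - S` has at most one neighbour `u D` in `S`: two neighbours would
put the first edge of the path joining them in `S` on a cycle, although it is a bridge. So the
tree `S` with bags `{s, parent s}`, with the decomposition of each `D` hung below `u D` and `u D`
added to all its bags, is a tree decomposition one wider than those of the components `D`.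

`bd ≤ ed + 1`: a component that is a forest is a tree of bridges of itself, and a single vertex is
a tree of bridges.
-/

open SimpleGraph

lemma SimpleGraph.Connected.exists_adj_dist_lt {α : Type*} {H : SimpleGraph α} (hH : H.Connected)
    (r : α) {x : α} (hx : x ≠ r) : ∃ y, H.Adj x y ∧ H.dist y r < H.dist x r := by
  obtain ⟨p, hp⟩ := hH.exists_walk_length_eq_dist x r
  cases p with
  | nil => exact absurd rfl hx
  | cons h q =>
    refine ⟨_, h, ?_⟩
    have := dist_le q
    rw [← hp, Walk.length_cons]
    omega

structure ParentTree (ι : Type*) where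
  parent : ι → ι
  rank : ι → ℕ
  root : ι
  parent_root : parent root = root
  rank_parent_lt : ∀ i, i ≠ root → rank (parent i) < rank i

namespace ParentTree

variable {ι : Type*} (T : ParentTree ι)

def graph : SimpleGraph ι := fromRel fun i j => T.parent i = j

variable {T}

lemma graph_adj {i j : ι} : T.graph.Adj i j ↔ i ≠ j ∧ (T.parent i = j ∨ T.parent j = i) :=
  fromRel_adj ..

lemma parent_ne {i : ι} (hi : i ≠ T.root) : T.parent i ≠ i := fun h =>
  (T.rank_parent_lt i hi).ne (congrArg T.rank h)

lemma graph_adj_parent {i : ι} (hi : i ≠ T.root) : T.graph.Adj i (T.parent i) :=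
  graph_adj.2 ⟨(parent_ne hi).symm, Or.inl rfl⟩

lemma parent_eq_of_adj_of_rank_le {i j : ι} (h : T.graph.Adj i j) (hji : T.rank j ≤ T.rank i) :
    T.parent i = j := by
  obtain ⟨hne, hij | hji'⟩ := graph_adj.1 h
  · exact hij
  · have hj : j ≠ T.root := by
      rintro rfl
      exact hne (hji'.symm.trans T.parent_root)
    exact absurd (hji' ▸ T.rank_parent_lt j hj) hji.not_gt

lemma induce_graph_connected {M : Set ι} {m : ι} (hm : m ∈ M)
    (hM : ∀ i ∈ M, i ≠ m → i ≠ T.root ∧ T.parent i ∈ M) :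
    (T.graph.induce M).Connected := by
  have reach : ∀ n, ∀ i (hi : i ∈ M), T.rank i = n →
      (T.graph.induce M).Reachable ⟨i, hi⟩ ⟨m, hm⟩ := by
    intro n
    induction n using Nat.strong_induction_on with
    | _ n ih =>
      intro i hi hn
      by_cases him : i = m
      · subst him; rfl
      obtain ⟨hir, hpi⟩ := hM i hi him
      have hadj : (T.graph.induce M).Adj ⟨i, hi⟩ ⟨T.parent i, hpi⟩ := graph_adj_parent hir
      exact hadj.reachable.trans (ih _ (hn ▸ T.rank_parent_lt i hir) _ hpi rfl)
  have : Nonempty M := ⟨⟨m, hm⟩⟩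
  exact ⟨fun i j => (reach _ i i.2 rfl).trans (reach _ j j.2 rfl).symm⟩

lemma graph_connected : T.graph.Connected :=
  (induceUnivIso T.graph).connected_iff.1 <|
    induce_graph_connected (Set.mem_univ T.root) fun _ _ hi => ⟨hi, Set.mem_univ _⟩

/-- On a cycle, the vertex of maximal rank would have both of its cycle neighbours as parent. -/
lemma graph_isAcyclic : T.graph.IsAcyclic := by
  classical
  intro v c hc
  obtain ⟨m, hm, hmax⟩ := c.support.toFinset.exists_max_image T.rank ⟨v, by simp⟩
  rw [List.mem_toFinset] at hm
  set c' := c.rotate m hm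
  have hc' : c'.IsCycle := hc.rotate hm
  have hmax' : ∀ w ∈ c'.support, T.rank w ≤ T.rank m := fun w hw =>
    hmax w (List.mem_toFinset.2 ((c.mem_support_rotate_iff m hm).1 hw))
  apply hc'.snd_ne_penultimate
  rw [← parent_eq_of_adj_of_rank_le (c'.adj_snd hc'.not_nil) (hmax' _ (c'.getVert_mem_support _)),
    ← parent_eq_of_adj_of_rank_le (c'.adj_penultimate hc'.not_nil).symm
      (hmax' _ (c'.getVert_mem_support _))]

lemma graph_le {H : SimpleGraph ι} (h : ∀ i, i ≠ T.root → H.Adj i (T.parent i)) :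
    T.graph ≤ H := by
  have hroot : ∀ i, T.parent i ≠ i → i ≠ T.root := fun i hi hr => hi (hr ▸ T.parent_root)
  intro i j hij
  obtain ⟨hne, rfl | rfl⟩ := graph_adj.1 hij
  · exact h i (hroot i hne.symm)
  · exact (h j (hroot j hne)).symm

/-- Breadth-first search: every vertex other than the root points to a neighbour closer to it. -/
lemma _root_.SimpleGraph.Connected.exists_parentTree {H : SimpleGraph ι} (hH : H.Connected) :
    ∃ T : ParentTree ι, T.graph ≤ H := by
  classical
  obtain ⟨r⟩ := hH.nonempty
  choose y hy using fun x (hx : x ≠ r) => hH.exists_adj_dist_lt r hx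
  let T : ParentTree ι :=
    { parent := fun x => if hx : x = r then r else y x hx
      rank := fun x => H.dist x r
      root := r
      parent_root := by simp
      rank_parent_lt := fun x hx => by simpa [hx] using (hy x hx).2 }
  exact ⟨T, graph_le fun x hx => by simpa [T, hx] using (hy x hx).1⟩

section Graft

variable {τ J : Type*} {κ : J → Type*} (T : ParentTree τ) (U : ∀ j, ParentTree (κ j))
  (a : J → τ)

/-- The tree obtained by hanging, for every `j`, the root of `U j` below the node `a j` of `T`. -/
noncomputable def graft : ParentTree (τ ⊕ Σ j, κ j) where
  parent := Sum.elim (fun i => .inl (T.parent i)) fun p =>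
    open scoped Classical in
    if p.2 = (U p.1).root then .inl (a p.1) else .inr ⟨p.1, (U p.1).parent p.2⟩
  rank := Sum.elim T.rank fun p => T.rank (a p.1) + (U p.1).rank p.2 + 1
  root := .inl T.root
  parent_root := by simp [T.parent_root]
  rank_parent_lt := by
    rintro (i | ⟨j, x⟩) hi
    · simpa using T.rank_parent_lt i fun h => hi (h ▸ rfl)
    · by_cases hx : x = (U j).root
      · simp [hx]
      · simpa [hx] using (U j).rank_parent_lt x hx

@[simp] lemma graft_parent_inr_root (j : J) :
    (T.graft U a).parent (.inr ⟨j, (U j).root⟩) = .inl (a j) := by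
  simp [graft]

@[simp] lemma graft_parent_inr_of_ne {j : J} {x : κ j} (hx : x ≠ (U j).root) :
    (T.graft U a).parent (.inr ⟨j, x⟩) = .inr ⟨j, (U j).parent x⟩ := by
  simp [graft, hx]

end Graft

end ParentTree

namespace SimpleGraph.ConnectedComponent

variable {V : Type*} {G : SimpleGraph V} {A : Set V}

lemma image_val_supp_subset (C : (G.induce A).ConnectedComponent) :
    Subtype.val '' C.supp ⊆ A :=
  Subtype.coe_image_subset _ _

lemma val_mem_image_val_supp (x : A) :
    x.1 ∈ Subtype.val '' ((G.induce A).connectedComponentMk x).supp :=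
  ⟨x, rfl, rfl⟩

lemma eq_of_mem_image_val_supp {C D : (G.induce A).ConnectedComponent} {v : V}
    (hC : v ∈ Subtype.val '' C.supp) (hD : v ∈ Subtype.val '' D.supp) : C = D := by
  obtain ⟨x, hx, rfl⟩ := hC
  obtain ⟨y, hy, hxy⟩ := hD
  rw [Subtype.ext hxy] at hy
  exact hx.symm.trans hy

lemma mem_image_val_supp_of_adj {C : (G.induce A).ConnectedComponent} {v w : V}
    (hv : v ∈ Subtype.val '' C.supp) (hw : w ∈ A) (hvw : G.Adj v w) :
    w ∈ Subtype.val '' C.supp := by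
  obtain ⟨x, hx, rfl⟩ := hv
  have hwx : (G.induce A).Adj ⟨w, hw⟩ x := hvw.symm
  exact ⟨⟨w, hw⟩, (ConnectedComponent.sound hwx.reachable).trans hx, rfl⟩

lemma connected_induce_image_val_supp (C : (G.induce A).ConnectedComponent) :
    (G.induce (Subtype.val '' C.supp)).Connected :=
  C.connected_toSimpleGraph.map
    ⟨fun x => ⟨x.1.1, x.1, x.2, rfl⟩, fun h => h⟩
    (by rintro ⟨_, x, hx, rfl⟩; exact ⟨⟨x, hx⟩, rfl⟩)

end SimpleGraph.ConnectedComponent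

namespace SimpleGraph

variable {V : Type*} {G : SimpleGraph V} {S W : Set V}

lemma isAcyclic_induce_of_isBridge (hSW : S ⊆ W)
    (hbr : ∀ x y (hx : x ∈ S) (hy : y ∈ S), G.Adj x y →
      (G.induce W).IsBridge s(⟨x, hSW hx⟩, ⟨y, hSW hy⟩)) :
    (G.induce S).IsAcyclic := by
  intro v c hc
  let f := G.induceHomOfLE hSW
  refine (hbr _ _ v.2 c.snd.2 (c.adj_snd hc.not_nil)).notMem_edges_of_isCycle
    (hc.map (f := f.toHom) f.injective) ?_
  rw [Walk.edges_map]
  exact List.mem_map_of_mem (c.mk_start_snd_mem_edges hc.not_nil)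

/-- Otherwise the first edge of a path from `t` to `s` in `G[S]` would lie on a cycle through
the component of `x` and `y`, but it is a bridge. -/
lemma eq_of_adj_of_reachable_induce_diff (hSW : S ⊆ W) (hconn : (G.induce S).Connected)
    (hbr : ∀ x y (hx : x ∈ S) (hy : y ∈ S), G.Adj x y →
      (G.induce W).IsBridge s(⟨x, hSW hx⟩, ⟨y, hSW hy⟩))
    {x y : ↥(W \ S)} (hxy : (G.induce (W \ S)).Reachable x y) {s t : V} (hs : s ∈ S)
    (ht : t ∈ S) (hxs : G.Adj x s) (hyt : G.Adj y t) : s = t := by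
  by_contra hst
  obtain ⟨p, hp⟩ := hconn.exists_isPath ⟨t, ht⟩ ⟨s, hs⟩
  cases p with
  | nil => exact hst rfl
  | @cons _ t' _ htt' q =>
    let f := G.induceHomOfLE hSW
    let g := G.induceHomOfLE (Set.sdiff_subset : W \ S ⊆ W)
    obtain ⟨r⟩ := hxy
    let back : (G.induce W).Walk (f ⟨s, hs⟩) (f ⟨t, ht⟩) :=
      .cons (show (G.induce W).Adj (f ⟨s, hs⟩) (g x) from hxs.symm)
        ((r.map g.toHom).concat (show (G.induce W).Adj (g y) (f ⟨t, ht⟩) from hyt))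
    have hbridge : (G.induce W).IsBridge s(f ⟨t, ht⟩, f t') := hbr t t' ht t'.2 htt'
    have hmem :=
      isBridge_iff_forall_walk_mem_edges.1 hbridge ((q.map f.toHom).append back).reverse
    simp only [Walk.edges_reverse, List.mem_reverse, Walk.edges_append, List.mem_append] at hmem
    rcases hmem with hq | hback
    · have := (q.map f.toHom).fst_mem_support_of_mem_edges hq
      rw [Walk.support_map, List.mem_map] at this
      obtain ⟨z, hz, hzt⟩ := this
      obtain rfl : z = ⟨t, ht⟩ := f.injective hzt
      exact ((Walk.cons_isPath_iff _ _).1 hp).2 hz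
    · have hfg : ∀ z w, f z ≠ g w := fun z w h => w.2.2 (congrArg Subtype.val h ▸ z.2)
      simp only [back, Walk.edges_cons, Walk.edges_concat, Walk.edges_map, List.concat_eq_append,
        List.mem_cons, List.mem_append, List.mem_map, List.not_mem_nil, or_false,
        Sym2.eq_iff] at hback
      obtain ⟨⟨-, h⟩ | ⟨h, -⟩⟩ | ⟨e, -, he⟩ | ⟨h, -⟩ | ⟨-, h⟩ := hback
      · exact hfg _ _ h
      · exact hfg _ _ h
      · obtain ⟨w, -, hw⟩ := Sym2.mem_map.1 (he ▸ Sym2.mem_mk_left _ _)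
        exact hfg _ _ hw.symm
      · exact hfg _ _ h
      · exact hfg _ _ h

end SimpleGraph

/-- A tree decomposition of `G[A]` of width at most `k` whose tree is given by parent pointers;
the subtree condition for `v` says that the nodes whose bags contain `v` are closed under
`parent`, except at a single top node. -/
structure RootedTreeDecomp {V : Type} (G : SimpleGraph V) (A : Set V) (k : ℕ) where
  ι : Type
  [finite : Finite ι]
  tree : ParentTree ι
  bag : ι → Set V
  bag_subset : ∀ i, bag i ⊆ A
  exists_adj_mem_bag : ∀ v ∈ A, ∀ w ∈ A, G.Adj v w → ∃ i, v ∈ bag i ∧ w ∈ bag i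
  exists_top : ∀ v ∈ A, ∃ m, v ∈ bag m ∧
    ∀ i, v ∈ bag i → i ≠ m → i ≠ tree.root ∧ v ∈ bag (tree.parent i)
  ncard_bag_le : ∀ i, (bag i).ncard ≤ k + 1

namespace RootedTreeDecomp

attribute [instance] finite

variable {V : Type} {G : SimpleGraph V} {A : Set V} {k : ℕ}

lemma exists_mem_bag (T : RootedTreeDecomp G A k) {v : V} (hv : v ∈ A) : ∃ i, v ∈ T.bag i :=
  (T.exists_top v hv).imp fun _ h => h.1

def mono (T : RootedTreeDecomp G A k) {k' : ℕ} (h : k ≤ k') : RootedTreeDecomp G A k' :=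
  { T with ncard_bag_le := fun i => (T.ncard_bag_le i).trans (by omega) }

def empty (G : SimpleGraph V) (k : ℕ) : RootedTreeDecomp G ∅ k where
  ι := Unit
  tree := ⟨id, fun _ => 0, (), rfl, fun _ h => absurd rfl h⟩
  bag _ := ∅
  bag_subset _ := le_rfl
  exists_adj_mem_bag _ hv := absurd hv (Set.notMem_empty _)
  exists_top _ hv := absurd hv (Set.notMem_empty _)
  ncard_bag_le _ := by simp

def ofParentTree [Finite V] {S : Set V} (T : ParentTree S) (hT : G.induce S ≤ T.graph) :
    RootedTreeDecomp G S 1 where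
  ι := S
  tree := T
  bag s := {s.1, (T.parent s).1}
  bag_subset s := by simp [Set.insert_subset_iff]
  exists_adj_mem_bag v hv w hw hvw := by
    have hvw' : (G.induce S).Adj ⟨v, hv⟩ ⟨w, hw⟩ := hvw
    obtain ⟨-, h | h⟩ := ParentTree.graph_adj.1 (hT hvw')
    · exact ⟨⟨v, hv⟩, by simp [h]⟩
    · exact ⟨⟨w, hw⟩, by simp [h]⟩
  exists_top v hv := by
    refine ⟨⟨v, hv⟩, by simp, fun i hvi hi => ?_⟩
    have hpi : T.parent i = ⟨v, hv⟩ := by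
      rcases hvi with h | h
      · exact absurd (Subtype.ext h.symm) hi
      · exact Subtype.ext h.symm
    refine ⟨fun hr => hi ?_, by simp [hpi]⟩
    rw [← hpi, hr, T.parent_root]
  ncard_bag_le s := (Set.ncard_insert_le _ _).trans (by simp)

section Attach

open SimpleGraph.ConnectedComponent

variable {S A : Set V} {m : ℕ} (T : RootedTreeDecomp G S m)
  (TC : ∀ C : (G.induce A).ConnectedComponent, RootedTreeDecomp G (Subtype.val '' C.supp) k)
  (a : (G.induce A).ConnectedComponent → T.ι) (X : (G.induce A).ConnectedComponent → Set V)

noncomputable abbrev attachTree : ParentTree (T.ι ⊕ Σ C, (TC C).ι) :=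
  T.tree.graft (fun C => (TC C).tree) a

def attachBag : T.ι ⊕ (Σ C, (TC C).ι) → Set V :=
  Sum.elim T.bag fun p => (TC p.1).bag p.2 ∪ X p.1

variable {T TC a X}

lemma attachBag_subset (hX : ∀ C, X C ⊆ T.bag (a C)) :
    ∀ i, attachBag T TC X i ⊆ S ∪ A
  | .inl i => (T.bag_subset i).trans Set.subset_union_left
  | .inr ⟨C, j⟩ => Set.union_subset
      (((TC C).bag_subset j).trans (C.image_val_supp_subset.trans Set.subset_union_right))
      ((hX C).trans ((T.bag_subset _).trans Set.subset_union_left))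

lemma exists_adj_mem_attachBag
    (hadj : ∀ C, ∀ x ∈ Subtype.val '' C.supp, ∀ s ∈ S, G.Adj x s → s ∈ X C) :
    ∀ v ∈ S ∪ A, ∀ w ∈ S ∪ A, G.Adj v w →
      ∃ i, v ∈ attachBag T TC X i ∧ w ∈ attachBag T TC X i := by
  have cross : ∀ x ∈ A, ∀ s ∈ S, G.Adj x s →
      ∃ i, x ∈ attachBag T TC X i ∧ s ∈ attachBag T TC X i := by
    intro x hx s hs hxs
    have hxC := val_mem_image_val_supp (G := G) ⟨x, hx⟩
    obtain ⟨j, hj⟩ := (TC _).exists_mem_bag hxC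
    exact ⟨.inr ⟨_, j⟩, .inl hj, .inr (hadj _ x hxC s hs hxs)⟩
  rintro v (hv | hv) w (hw | hw) hvw
  · obtain ⟨i, h⟩ := T.exists_adj_mem_bag v hv w hw hvw
    exact ⟨.inl i, h⟩
  · exact (cross w hw v hv hvw.symm).imp fun _ => And.symm
  · exact cross v hv w hw hvw
  · have hvC := val_mem_image_val_supp (G := G) ⟨v, hv⟩
    obtain ⟨j, h⟩ :=
      (TC _).exists_adj_mem_bag v hvC w (mem_image_val_supp_of_adj hvC hw hvw) hvw
    exact ⟨.inr ⟨_, j⟩, .inl h.1, .inl h.2⟩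

lemma exists_top_attachBag_of_mem_left (hSA : Disjoint S A) (hX : ∀ C, X C ⊆ T.bag (a C))
    {v : V} (hv : v ∈ S) :
    ∃ t, v ∈ attachBag T TC X t ∧ ∀ i, v ∈ attachBag T TC X i → i ≠ t →
      i ≠ (attachTree T TC a).root ∧ v ∈ attachBag T TC X ((attachTree T TC a).parent i) := by
  obtain ⟨t, ht, hcl⟩ := T.exists_top v hv
  refine ⟨.inl t, ht, ?_⟩
  rintro (i | ⟨C, j⟩) hvi hit
  · obtain ⟨hir, hvp⟩ := hcl i hvi fun h => hit (h ▸ rfl)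
    exact ⟨fun h => hir (Sum.inl_injective h), hvp⟩
  · have hvX : v ∈ X C := hvi.resolve_left fun h =>
      hSA.ne_of_mem hv (C.image_val_supp_subset ((TC C).bag_subset j h)) rfl
    refine ⟨Sum.inr_ne_inl, ?_⟩
    by_cases hj : j = (TC C).tree.root
    · subst hj
      rw [ParentTree.graft_parent_inr_root T.tree (fun C => (TC C).tree) a]
      exact hX C hvX
    · rw [ParentTree.graft_parent_inr_of_ne T.tree (fun C => (TC C).tree) a hj]
      exact .inr hvX

lemma exists_top_attachBag_of_mem_right (hSA : Disjoint S A) (hX : ∀ C, X C ⊆ T.bag (a C))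
    {v : V} (hv : v ∈ A) :
    ∃ t, v ∈ attachBag T TC X t ∧ ∀ i, v ∈ attachBag T TC X i → i ≠ t →
      i ≠ (attachTree T TC a).root ∧ v ∈ attachBag T TC X ((attachTree T TC a).parent i) := by
  have hvC := val_mem_image_val_supp (G := G) ⟨v, hv⟩
  obtain ⟨t, ht, hcl⟩ := (TC _).exists_top v hvC
  refine ⟨.inr ⟨_, t⟩, .inl ht, ?_⟩
  have hvS : ∀ i, v ∉ T.bag i := fun i h => hSA.ne_of_mem (T.bag_subset i h) hv rfl
  rintro (i | ⟨C, j⟩) hvi hit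
  · exact absurd hvi (hvS i)
  · have hvj : v ∈ (TC C).bag j := hvi.resolve_right fun h => hvS _ (hX C h)
    obtain rfl := eq_of_mem_image_val_supp ((TC C).bag_subset j hvj) hvC
    obtain ⟨hjr, hvp⟩ := hcl j hvj fun h => hit (h ▸ rfl)
    refine ⟨Sum.inr_ne_inl, ?_⟩
    rw [ParentTree.graft_parent_inr_of_ne T.tree (fun C => (TC C).tree) a hjr]
    exact .inl hvp

lemma ncard_attachBag_le (hXcard : ∀ C, k + (X C).ncard ≤ m) :
    ∀ i, (attachBag T TC X i).ncard ≤ m + 1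
  | .inl i => T.ncard_bag_le i
  | .inr ⟨C, j⟩ => by
      change ((TC C).bag j ∪ X C).ncard ≤ m + 1
      have := (TC C).ncard_bag_le j
      have := hXcard C
      exact (Set.ncard_union_le _ _).trans (by omega)

/-- Hang the decomposition of every component `C` of `G[A]` below the node `a C` of a
decomposition of `G[S]`, adding to its bags the set `X C` of possible neighbours of `C` in `S`. -/
noncomputable def attach [Finite V] (T : RootedTreeDecomp G S m)
    (TC : ∀ C : (G.induce A).ConnectedComponent, RootedTreeDecomp G (Subtype.val '' C.supp) k)
    (a : (G.induce A).ConnectedComponent → T.ι) (X : (G.induce A).ConnectedComponent → Set V)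
    (hSA : Disjoint S A) (hX : ∀ C, X C ⊆ T.bag (a C)) (hXcard : ∀ C, k + (X C).ncard ≤ m)
    (hadj : ∀ C, ∀ x ∈ Subtype.val '' C.supp, ∀ s ∈ S, G.Adj x s → s ∈ X C) :
    RootedTreeDecomp G (S ∪ A) m where
  ι := T.ι ⊕ Σ C, (TC C).ι
  tree := attachTree T TC a
  bag := attachBag T TC X
  bag_subset := attachBag_subset hX
  exists_adj_mem_bag := exists_adj_mem_attachBag hadj
  exists_top _ hv := hv.elim (exists_top_attachBag_of_mem_left hSA hX)
    (exists_top_attachBag_of_mem_right hSA hX)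
  ncard_bag_le := ncard_attachBag_le hXcard

end Attach

lemma hasTreeDecompWidthLE (T : RootedTreeDecomp G Set.univ k) : HasTreeDecompWidthLE G k := by
  refine ⟨T.ι, Fintype.ofFinite _, T.tree.graph, T.bag, T.tree.graph_connected,
    T.tree.graph_isAcyclic, fun v => T.exists_mem_bag trivial,
    fun v w => T.exists_adj_mem_bag v trivial w trivial, fun v => ?_, T.ncard_bag_le⟩
  obtain ⟨m, hm, hcl⟩ := T.exists_top v trivial
  exact ParentTree.induce_graph_connected hm hcl

lemma nonempty_of_isBridge [Finite V] {S W : Set V} (hSW : S ⊆ W) (hconn : (G.induce S).Connected)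
    (hbr : ∀ x y (hx : x ∈ S) (hy : y ∈ S), G.Adj x y →
      (G.induce W).IsBridge s(⟨x, hSW hx⟩, ⟨y, hSW hy⟩))
    (h : ∀ D : (G.induce (W \ S)).ConnectedComponent,
      Nonempty (RootedTreeDecomp G (Subtype.val '' D.supp) k)) :
    Nonempty (RootedTreeDecomp G W (k + 1)) := by
  obtain ⟨T, hT⟩ := hconn.exists_parentTree
  have hle : G.induce S ≤ T.graph :=
    (isTree_iff_minimal_connected.1 ⟨hconn, isAcyclic_induce_of_isBridge hSW hbr⟩).le_of_le
      T.graph_connected hT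
  have hatt : ∀ D : (G.induce (W \ S)).ConnectedComponent,
      ∃ u : S, ∀ x ∈ Subtype.val '' D.supp, ∀ s ∈ S, G.Adj x s → s = u := by
    intro D
    by_cases hD : ∃ x ∈ Subtype.val '' D.supp, ∃ s ∈ S, G.Adj x s
    · obtain ⟨_, ⟨x, hx, rfl⟩, s, hs, hxs⟩ := hD
      refine ⟨⟨s, hs⟩, ?_⟩
      rintro _ ⟨y, hy, rfl⟩ t ht hyt
      exact eq_of_adj_of_reachable_induce_diff hSW hconn hbr
        (ConnectedComponent.exact (hy.trans hx.symm)) ht hs hyt hxs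
    · push Not at hD
      exact ⟨T.root, fun x hx s hs hxs => absurd hxs (hD x hx s hs)⟩
  choose u hu using hatt
  rw [← Set.union_sdiff_cancel hSW]
  exact ⟨((ofParentTree T hle).mono (by omega)).attach (fun D => (h D).some) u
    (fun D => {(u D).1}) Set.disjoint_sdiff_right
    (fun D => Set.singleton_subset_iff.2 (Set.mem_insert _ _)) (fun D => by simp) hu⟩

end RootedTreeDecomp

section BridgeDepth

variable {V : Type} [Finite V] {G : SimpleGraph V}

lemma BridgeDepthLE.nonempty_rootedTreeDecomp {A : Set V} {k : ℕ} (h : BridgeDepthLE G A k) :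
    ∀ C : (G.induce A).ConnectedComponent,
      Nonempty (RootedTreeDecomp G (Subtype.val '' C.supp) k) := by
  induction h with
  | empty k => exact fun C => C.out.2.elim
  | step A k S hS hconn hbr _ ih =>
    exact fun C => RootedTreeDecomp.nonempty_of_isBridge (hS C) (hconn C) (hbr C) (ih C)

lemma BridgeDepthLE.hasTreeDecompWidthLE {k : ℕ} (h : BridgeDepthLE G Set.univ k) :
    HasTreeDecompWidthLE G k := by
  have T := (RootedTreeDecomp.empty G k).attach (fun C => (h.nonempty_rootedTreeDecomp C).some)
    (fun _ => ()) (fun _ => ∅) (Set.empty_disjoint _) (fun _ => Set.empty_subset _)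
    (fun _ => by simp) (fun _ _ _ _ hs => absurd hs (Set.notMem_empty _))
  rw [Set.empty_union] at T
  exact T.hasTreeDecompWidthLE

end BridgeDepth

section Elimination

variable {V : Type} {G : SimpleGraph V}

lemma ElimLE.bridgeDepthLE_succ {A : Set V} {k : ℕ}
    (h : ElimLE G (fun B => (G.induce B).IsAcyclic) A k) : BridgeDepthLE G A (k + 1) := by
  induction h with
  | base A k hA =>
    refine .step A k (fun C => Subtype.val '' C.supp) (fun _ => subset_rfl)
      (fun C => C.connected_induce_image_val_supp) (fun C x y hx hy hxy => ?_)
      (fun _ => by rw [Set.sdiff_self]; exact .empty k)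
    let f := G.induceHomOfLE C.image_val_supp_subset
    exact isAcyclic_iff_forall_adj_isBridge.1 (hA.comap f.toHom f.injective) hxy
  | step A k v hv _ ih =>
    refine .step A (k + 1) (fun C => {(v C).1})
      (fun C => Set.singleton_subset_iff.2 ⟨v C, hv C, rfl⟩) (fun _ => ⟨.of_subsingleton⟩)
      (fun _ x y hx hy hxy => absurd (hx.trans hy.symm) hxy.ne) ih

lemma elimLE_of_ncard_le [Finite V] {Base : Set V → Prop} (hbase : Base ∅) {A : Set V} {k : ℕ}
    (hA : A.ncard ≤ k) : ElimLE G Base A k := by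
  induction k generalizing A with
  | zero =>
    rw [(Set.ncard_eq_zero A.toFinite).1 (Nat.le_zero.1 hA)]
    exact .base _ _ hbase
  | succ k ih =>
    refine .step A k (fun C => C.out) (fun C => C.out_eq) fun C => ih ?_
    calc ((Subtype.val '' C.supp) \ {C.out.1}).ncard
        ≤ (A \ {C.out.1}).ncard :=
          Set.ncard_le_ncard (Set.sdiff_subset_sdiff_left C.image_val_supp_subset)
      _ = A.ncard - 1 := Set.ncard_sdiff_singleton_of_mem C.out.2
      _ ≤ k := by omega

end Elimination

theorem stmt3 (V : Type) [Fintype V] (G : SimpleGraph V) :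
    treewidth G ≤ bridgeDepth G ∧ bridgeDepth G ≤ edForest G + 1 := by
  have hed : ElimLE G (fun A => (G.induce A).IsAcyclic) Set.univ (edForest G) :=
    Nat.sInf_mem ⟨_, elimLE_of_ncard_le IsAcyclic.of_subsingleton le_rfl⟩
  have hbd : BridgeDepthLE G Set.univ (bridgeDepth G) :=
    Nat.sInf_mem ⟨_, hed.bridgeDepthLE_succ⟩
  exact ⟨Nat.sInf_le hbd.hasTreeDecompWidthLE, Nat.sInf_le hed.bridgeDepthLE_succ⟩
end

section
/- Let G be a graph with a 𝒢F-elimination forest (F, (B_u)_{u ∈ V(F)}) and let η be an integer with ed_{𝒢F}(G) ≤ η (in particular the height of the elimination forest is at most η). Let X be a minimum feedback vertex set of G and let v be a leaf of F. Then |X ∩ B_v| ≤ η. -/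
/-- `X` is a feedback vertex set of `G`: removing `X` leaves an acyclic graph. -/
def IsFVS {V : Type} (G : SimpleGraph V) (X : Set V) : Prop :=
  (G.induce Xᶜ).IsAcyclic

/-- `X` is a minimum feedback vertex set of `G`. -/
def IsMinFVS {V : Type} (G : SimpleGraph V) (X : Set V) : Prop :=
  IsFVS G X ∧ ∀ Y : Set V, IsFVS G Y → X.ncard ≤ Y.ncard

/-- Every connected component of `G[A]` contains at most one vertex of `T`. -/
def SeparatedIn {V : Type} (G : SimpleGraph V) (A T : Set V) : Prop :=
  ∀ (t₁ t₂ : V) (h₁ : t₁ ∈ A) (h₂ : t₂ ∈ A), t₁ ∈ T → t₂ ∈ T →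
    (G.induce A).Reachable ⟨t₁, h₁⟩ ⟨t₂, h₂⟩ → t₁ = t₂

/-- `X` misses some vertex of `S`, or leaves two vertices of `T` connected in `G - X`. -/
def BadFor {V : Type} (G : SimpleGraph V) (S T X : Set V) : Prop :=
  (¬ S ⊆ X) ∨ ¬ SeparatedIn G Xᶜ T
/-- A `𝒢F`-elimination forest of `G` with node type `ι`: a rooted forest given by a
parent function (roots are their own parent, and iterating the parent function from any
node eventually reaches a root), together with bags that partition `V(G)`, such that
every non-leaf bag is a singleton, every leaf bag induces a connected forest, and the
endpoints of every edge of `G` lie in bags that are in ancestor-descendant relation. -/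
structure ElimForestOn (V ι : Type) (G : SimpleGraph V) where
  parent : ι → ι
  bag : ι → Set V
  wf : ∀ u : ι, ∃ n : ℕ, parent^[n + 1] u = parent^[n] u
  bag_exists : ∀ v : V, ∃ u : ι, v ∈ bag u
  bag_unique : ∀ (v : V) (u w : ι), v ∈ bag u → v ∈ bag w → u = w
  nonleaf_singleton : ∀ u : ι, (∃ c : ι, c ≠ u ∧ parent c = u) → ∃ x : V, bag u = {x}
  leaf_forest : ∀ u : ι, (∀ c : ι, parent c = u → c = u) → (G.induce (bag u)).IsAcyclic
  leaf_connected : ∀ u : ι, (∀ c : ι, parent c = u → c = u) → (G.induce (bag u)).Connected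
  edge_anc : ∀ v w : V, G.Adj v w → ∀ s t : ι, v ∈ bag s → w ∈ bag t →
    (∃ n : ℕ, parent^[n] t = s) ∨ (∃ n : ℕ, parent^[n] s = t)

namespace ElimForestOn

variable {V ι : Type} {G : SimpleGraph V}

/-- A node is a leaf when it has no (proper) children. -/
def IsLeaf (E : ElimForestOn V ι G) (u : ι) : Prop :=
  ∀ c : ι, E.parent c = u → c = u

/-- The elimination forest is a tree: it has a unique root. -/
def IsTree (E : ElimForestOn V ι G) : Prop :=
  (∃ r : ι, E.parent r = r) ∧ ∀ u v : ι, E.parent u = u → E.parent v = v → u = v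

/-- `tree[c]`: the union of the bags of `c` and of all descendants of `c`. -/
def treeSet (E : ElimForestOn V ι G) (c : ι) : Set V :=
  {v | ∃ w : ι, (∃ n : ℕ, E.parent^[n] w = c) ∧ v ∈ E.bag w}

/-- The depth of a node: the number of edges on the path to its root. -/
noncomputable def depth (E : ElimForestOn V ι G) (u : ι) : ℕ :=
  sInf {n | E.parent^[n + 1] u = E.parent^[n] u}

/-- The height of the elimination forest: the maximum depth of a node. -/
noncomputable def height (E : ElimForestOn V ι G) : ℕ :=
  sSup (Set.range E.depth)

end ElimForestOn


/-!
Replacing `X ∩ B_v` by the bags of the proper ancestors of the leaf `v` gives again a feedback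
vertex set: an edge leaving `B_v` goes to an ancestor of `v`, so a cycle of the new complement
that meets `B_v` lies in the forest `G[B_v]`, while a cycle avoiding `B_v` avoids `X`. The proper
ancestors of `v` are at most `depth v ≤ η` singleton bags, so minimality of `X` bounds
`|X ∩ B_v|` by `η`.
-/

namespace SimpleGraph

variable {V : Type} {G : SimpleGraph V}

lemma Walk.support_subset_of_adj_closed {A : Set V}
    (hA : ∀ x y, G.Adj x y → x ∈ A → y ∈ A) {u w : V} (p : G.Walk u w) (hu : u ∈ A) :
    ∀ z ∈ p.support, z ∈ A := by
  induction p with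
  | nil => simpa using hu
  | cons huv p ih =>
    simp only [Walk.support_cons, List.mem_cons, forall_eq_or_imp]
    exact ⟨hu, ih (hA _ _ huv hu)⟩

lemma not_isAcyclic_induce_of_isCycle {s t : Set V} {a : s} {c : (G.induce s).Walk a a}
    (hc : c.IsCycle) (hct : ∀ z ∈ c.support, (z : V) ∈ t) : ¬ (G.induce t).IsAcyclic := by
  set p := c.map (Embedding.induce s).toHom
  have hpt : ∀ z ∈ p.support, z ∈ t := by
    simp only [p, Walk.support_map, List.mem_map]
    rintro _ ⟨z, hz, rfl⟩
    exact hct z hz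
  have hp : p.IsCycle := hc.map Subtype.val_injective
  refine fun ht => ht (p.induce t hpt) ?_
  rwa [← Walk.isCycle_map_iff_of_injective (f := (Embedding.induce t).toHom)
    Subtype.val_injective, Walk.map_induce]

/-- A cycle of `G[s]` meeting `A` stays in `A`; one avoiding `A` lies in `t`. -/
lemma isAcyclic_induce_of_adj_closed {s A t : Set V} (hA : (G.induce A).IsAcyclic)
    (ht : (G.induce t).IsAcyclic) (hst : s \ A ⊆ t)
    (hclosed : ∀ x ∈ s, ∀ y ∈ s, G.Adj x y → x ∈ A → y ∈ A) :
    (G.induce s).IsAcyclic := by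
  classical
  intro a c hc
  by_cases hmeet : ∃ z ∈ c.support, (z : V) ∈ A
  · obtain ⟨z, hz, hzA⟩ := hmeet
    refine not_isAcyclic_induce_of_isCycle (hc.rotate hz) ?_ hA
    exact (c.rotate z hz).support_subset_of_adj_closed (A := {x : s | (x : V) ∈ A})
      (fun x y hxy => hclosed x x.2 y y.2 hxy) hzA
  · push Not at hmeet
    exact not_isAcyclic_induce_of_isCycle hc (fun z hz => hst ⟨z.2, hmeet z hz⟩) ht

end SimpleGraph

namespace ElimForestOn

variable {V ι : Type} {G : SimpleGraph V} (E : ElimForestOn V ι G)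

def ancestorBags (v : ι) : Set V :=
  {x | ∃ n, E.parent^[n] v ≠ v ∧ x ∈ E.bag (E.parent^[n] v)}

lemma iterate_parent_eq_of_depth_le (u : ι) {m : ℕ} (hm : E.depth u ≤ m) :
    E.parent^[m] u = E.parent^[E.depth u] u := by
  have hfix : E.parent (E.parent^[E.depth u] u) = E.parent^[E.depth u] u := by
    rw [← Function.iterate_succ_apply' E.parent]
    exact Nat.sInf_mem (E.wf u)
  obtain ⟨k, rfl⟩ := Nat.exists_eq_add_of_le hm
  rw [add_comm, Function.iterate_add_apply, Function.iterate_fixed hfix]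

lemma depth_le_height [Finite ι] (u : ι) : E.depth u ≤ E.height :=
  le_csSup (Set.finite_range _).bddAbove (Set.mem_range_self u)

lemma exists_bag_eq_singleton_of_iterate_parent_ne {v : ι} :
    ∀ {n : ℕ}, E.parent^[n] v ≠ v → ∃ x, E.bag (E.parent^[n] v) = {x}
  | 0, h => absurd rfl h
  | n + 1, h => by
    rw [Function.iterate_succ_apply'] at h ⊢
    by_cases hfix : E.parent (E.parent^[n] v) = E.parent^[n] v
    · rw [hfix] at h ⊢
      exact exists_bag_eq_singleton_of_iterate_parent_ne h
    · exact E.nonleaf_singleton _ ⟨_, Ne.symm hfix, rfl⟩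

lemma ncard_ancestorBags_le_depth (v : ι) : (E.ancestorBags v).ncard ≤ E.depth v := by
  set d := E.depth v
  let layer (k : ℕ) : Set V := {x | E.parent^[k] v ≠ v ∧ x ∈ E.bag (E.parent^[k] v)}
  have hsub : E.ancestorBags v ⊆ ⋃ k ∈ Finset.Icc 1 d, layer k := by
    rintro x ⟨n, hne, hx⟩
    have hmin : E.parent^[min n d] v = E.parent^[n] v := by
      rcases le_total n d with h | h
      · rw [min_eq_left h]
      · rw [min_eq_right h, E.iterate_parent_eq_of_depth_le v h]
    have hpos : 1 ≤ min n d := Nat.one_le_iff_ne_zero.2 fun h0 => hne (by rw [← hmin, h0]; rfl)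
    exact Set.mem_biUnion (Finset.mem_Icc.2 ⟨hpos, min_le_right n d⟩)
      ⟨by rwa [hmin], by rwa [hmin]⟩
  have hlayer : ∀ k, (layer k).Subsingleton := by
    intro k
    by_cases hk : E.parent^[k] v = v
    · exact fun x hx => absurd hk hx.1
    · obtain ⟨y, hy⟩ := E.exists_bag_eq_singleton_of_iterate_parent_ne hk
      exact Set.subsingleton_singleton.anti fun x hx => hy ▸ hx.2
  calc (E.ancestorBags v).ncard ≤ (⋃ k ∈ Finset.Icc 1 d, layer k).ncard :=
        Set.ncard_le_ncard hsub
          ((Finset.Icc 1 d).finite_toSet.biUnion fun k _ => (hlayer k).finite)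
    _ ≤ ∑ k ∈ Finset.Icc 1 d, (layer k).ncard := Finset.set_ncard_biUnion_le _ _
    _ ≤ (Finset.Icc 1 d).card • 1 := Finset.sum_le_card_nsmul _ _ _ fun k _ =>
        (Set.ncard_le_one_iff (hlayer k).finite).2 fun ha hb => hlayer k ha hb
    _ = d := by simp

variable {E}

lemma IsLeaf.eq_of_iterate_parent_eq {v : ι} (hv : E.IsLeaf v) :
    ∀ {n : ℕ} {t : ι}, E.parent^[n] t = v → t = v
  | 0, _, h => h
  | _ + 1, t, h => hv t (hv.eq_of_iterate_parent_eq h)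

lemma IsLeaf.mem_bag_or_ancestorBags_of_adj {v : ι} (hv : E.IsLeaf v) {x y : V}
    (hxy : G.Adj x y) (hx : x ∈ E.bag v) : y ∈ E.bag v ∨ y ∈ E.ancestorBags v := by
  obtain ⟨t, hy⟩ := E.bag_exists y
  rcases E.edge_anc x y hxy v t hx hy with ⟨n, hn⟩ | ⟨n, hn⟩
  · exact .inl (hv.eq_of_iterate_parent_eq hn ▸ hy)
  · by_cases htv : t = v
    · exact .inl (htv ▸ hy)
    · exact .inr ⟨n, hn ▸ htv, hn ▸ hy⟩

lemma isFVS_diff_union_ancestorBags {X : Set V} (hX : IsFVS G X) {v : ι} (hv : E.IsLeaf v) :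
    IsFVS G ((X \ E.bag v) ∪ E.ancestorBags v) := by
  refine SimpleGraph.isAcyclic_induce_of_adj_closed (E.leaf_forest v hv) hX ?_ ?_
  · rintro x ⟨hxs, hxB⟩ hxX
    exact hxs (.inl ⟨hxX, hxB⟩)
  · intro x _ y hy hxy hxB
    exact (hv.mem_bag_or_ancestorBags_of_adj hxy hxB).resolve_right fun h => hy (.inr h)

end ElimForestOn

theorem stmt4_general (V ι : Type) [Fintype V] [Fintype ι] (G : SimpleGraph V)
    (E : ElimForestOn V ι G) (η : ℕ)
    (hheight : E.height ≤ η)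
    (X : Set V) (hX : IsMinFVS G X) (v : ι) (hleaf : E.IsLeaf v) :
    (X ∩ E.bag v).ncard ≤ η := by
  have hmin := hX.2 _ (E.isFVS_diff_union_ancestorBags hX.1 hleaf)
  have hunion := Set.ncard_union_le (X \ E.bag v) (E.ancestorBags v)
  have hsplit := Set.ncard_inter_add_ncard_sdiff_eq_ncard X (E.bag v)
  have hanc := (E.ncard_ancestorBags_le_depth v).trans ((E.depth_le_height v).trans hheight)
  omega

theorem stmt4 (V ι : Type) [Fintype V] [Fintype ι] (G : SimpleGraph V)
    (E : ElimForestOn V ι G) (η : ℕ)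
    (hed : ElimLE G (fun A => (G.induce A).IsAcyclic) Set.univ η)
    (hheight : E.height ≤ η)
    (X : Set V) (hX : IsMinFVS G X) (v : ι) (hleaf : E.IsLeaf v) :
    (X ∩ E.bag v).ncard ≤ η :=
  stmt4_general V ι G E η hheight X hX v hleaf
end

section
/- Let G be a graph, X ⊆ V(G), and let C* be a connected component of G − X. Let Ĝ = G − V(C*), let Ŷ be a feedback vertex set of Ĝ, let Y* be a feedback vertex set of C*, and set X₀ = X \ Ŷ. If Y* contains every vertex of C* with at least two neighbors in X₀ and separates the set of vertices of C* with exactly one neighbor in X₀ (i.e., each component of C* − Y* contains at most one such vertex), then Ŷ ∪ Y* is a feedback vertex set of G. -/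
/-- The vertices of a component (given by its vertex set `CV`) with at least two
neighbors in `X`. -/
def SVerts {V : Type} (G : SimpleGraph V) (CV X : Set V) : Set V :=
  {v ∈ CV | 2 ≤ (G.neighborSet v ∩ X).ncard}

/-- The vertices of a component (given by its vertex set `CV`) with exactly one
neighbor in `X`. -/
def TVerts {V : Type} (G : SimpleGraph V) (CV X : Set V) : Set V :=
  {v ∈ CV | (G.neighborSet v ∩ X).ncard = 1}

/-!
A cycle avoiding `Ŷ ∪ Y*` lies neither inside `C*` (as `C* - Y*` is acyclic) nor outside it
(as `Ĝ - Ŷ` is acyclic), so it uses an edge `ab` with `a ∈ C*`, `b ∉ C*`. Since `C*` is a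
component of `G - X`, every such `b` lies in `X₀`; as `a ∉ Y*` has fewer than two neighbours
in `X₀`, `b` is its only neighbour outside `C*` and `a ∈ 𝒯(C*, X₀)`. By separation, the
component of `a` in `C* - Y*` then sends no other edge out of `C*`, so `ab` is a bridge.
-/

namespace SimpleGraph

variable {V W : Type} {G : SimpleGraph V} {H : SimpleGraph W}

lemma ConnectedComponent.mem_image_supp_of_adj {s : Set V} {C : (G.induce s).ConnectedComponent}
    {u w : V} (hu : u ∈ Subtype.val '' C.supp) (hw : w ∈ s) (huw : G.Adj u w) :
    w ∈ Subtype.val '' C.supp := by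
  obtain ⟨u, hu, rfl⟩ := hu
  exact ⟨⟨w, hw⟩, C.mem_supp_of_adj_mem_supp hu (induce_adj.2 huw), rfl⟩

lemma isAcyclic_induce_induce {s t : Set V} {A : Set s} (hA : Set.MapsTo Subtype.val A t)
    (ht : (G.induce t).IsAcyclic) : ((G.induce s).induce A).IsAcyclic :=
  ht.comap (induceHom (Embedding.induce s).toHom hA)
    (induceHom_injective _ _ Subtype.val_injective.injOn)

lemma Walk.IsCycle.exists_boundary_dart [DecidableEq W] {S : Set W} {v : W} {c : H.Walk v v}
    (hc : c.IsCycle) (hv : v ∈ S) (hS : (H.induce S).IsAcyclic) :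
    ∃ d ∈ c.darts, d.fst ∈ S ∧ d.snd ∉ S := by
  by_contra! hno
  have hsupp : ∀ x ∈ c.support, x ∈ S := by
    intro x hx
    by_contra hxS
    obtain ⟨d, hd, hdS, hdS'⟩ := (c.takeUntil x hx).exists_boundary_dart S hv hxS
    exact hdS' (hno d (c.darts_takeUntil_subset_darts hx hd) hdS)
  refine hS (c.induce S hsupp) ((Walk.isCycle_map_iff_of_injective
    (f := (Embedding.induce S).toHom) Subtype.val_injective).mp ?_)
  rwa [Walk.map_induce]

lemma Walk.exists_boundary_dart_reachable {u v : W} (p : H.Walk u v) (S : Set W) (hu : u ∈ S)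
    (hv : v ∉ S) : ∃ d ∈ p.darts, ∃ hd : d.fst ∈ S, d.snd ∉ S ∧
      (H.induce S).Reachable ⟨u, hu⟩ ⟨d.fst, hd⟩ := by
  let K : Set W := {x | ∃ hx : x ∈ S, (H.induce S).Reachable ⟨u, hu⟩ ⟨x, hx⟩}
  obtain ⟨d, hd, ⟨hdS, hreach⟩, hdK⟩ :=
    p.exists_boundary_dart K ⟨hu, Reachable.refl _⟩ fun hvK => hv hvK.1
  refine ⟨d, hd, hdS, fun hd' => hdK ⟨hd', hreach.trans ?_⟩, hreach⟩
  exact (induce_adj.2 d.adj).reachable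

lemma isBridge_of_unique_exit {A : Set W}
    (hexit : ∀ a a' b b' (ha : a ∈ A) (ha' : a' ∈ A), b ∉ A → b' ∉ A →
      H.Adj a b → H.Adj a' b' → (H.induce A).Reachable ⟨a, ha⟩ ⟨a', ha'⟩ →
      a = a' ∧ b = b')
    {a b : W} (ha : a ∈ A) (hb : b ∉ A) (hab : H.Adj a b) : H.IsBridge s(a, b) := by
  rw [isBridge_iff_forall_walk_mem_edges]
  intro p
  obtain ⟨d, hd, hdA, hdA', hreach⟩ := p.exists_boundary_dart_reachable A ha hb
  obtain ⟨hfst, hsnd⟩ := hexit a d.fst b d.snd ha hdA hb hdA' hab d.adj hreach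
  have hedge : s(a, b) = d.edge := by rw [hfst, hsnd]; rfl
  exact hedge ▸ List.mem_map_of_mem hd

theorem isAcyclic_of_induce_of_unique_exit (A : Set W) (hin : (H.induce A).IsAcyclic)
    (hout : (H.induce Aᶜ).IsAcyclic)
    (hexit : ∀ a a' b b' (ha : a ∈ A) (ha' : a' ∈ A), b ∉ A → b' ∉ A →
      H.Adj a b → H.Adj a' b' → (H.induce A).Reachable ⟨a, ha⟩ ⟨a', ha'⟩ →
      a = a' ∧ b = b') :
    H.IsAcyclic := by
  classical
  intro v c hc
  by_cases hv : v ∈ A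
  · obtain ⟨d, hd, hdA, hdA'⟩ := hc.exists_boundary_dart hv hin
    exact (isBridge_of_unique_exit hexit hdA hdA' d.adj).notMem_edges_of_isCycle hc
      (List.mem_map_of_mem hd)
  · obtain ⟨d, hd, hdA, hdA'⟩ := hc.exists_boundary_dart (S := Aᶜ) hv hout
    have hbridge := isBridge_of_unique_exit hexit (not_not.mp hdA') hdA d.adj.symm
    rw [Sym2.eq_swap] at hbridge
    exact hbridge.notMem_edges_of_isCycle hc (List.mem_map_of_mem hd)

end SimpleGraph

open SimpleGraph

lemma neighborSet_inter_eq_singleton_of_notMem_SVerts {V : Type} [Finite V]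
    {G : SimpleGraph V} {CV X : Set V} {a b : V} (ha : a ∈ CV) (haS : a ∉ SVerts G CV X)
    (hb : b ∈ G.neighborSet a ∩ X) : G.neighborSet a ∩ X = {b} := by
  have hle : (G.neighborSet a ∩ X).ncard ≤ 1 := by
    by_contra! h
    exact haS ⟨ha, h⟩
  exact Set.eq_singleton_iff_unique_mem.2
    ⟨hb, fun x hx => (Set.ncard_le_one (Set.toFinite _)).1 hle x hx b hb⟩

theorem stmt6_general (V : Type) [Fintype V] (G : SimpleGraph V) (X : Set V)
    (C : (G.induce Xᶜ).ConnectedComponent)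
    (Yhat Ystar : Set V)
    (hYhat : (G.induce ((Subtype.val '' C.supp)ᶜ \ Yhat)).IsAcyclic)
    (hYstar : (G.induce (Subtype.val '' C.supp \ Ystar)).IsAcyclic)
    (hS : SVerts G (Subtype.val '' C.supp) (X \ Yhat) ⊆ Ystar)
    (hT : SeparatedIn G (Subtype.val '' C.supp \ Ystar)
      (TVerts G (Subtype.val '' C.supp) (X \ Yhat))) :
    IsFVS G (Yhat ∪ Ystar) := by
  set CV := Subtype.val '' C.supp
  set A : Set ↥(Yhat ∪ Ystar)ᶜ := Subtype.val ⁻¹' CV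
  have hAin : Set.MapsTo Subtype.val A (CV \ Ystar) := fun x hx => ⟨hx, fun h => x.2 (.inr h)⟩
  have hAout : Set.MapsTo Subtype.val Aᶜ (CVᶜ \ Yhat) :=
    fun x hx => ⟨hx, fun h => x.2 (.inl h)⟩
  have hexit_nbhd : ∀ {a b : ↥(Yhat ∪ Ystar)ᶜ}, a ∈ A → b ∉ A → G.Adj a b →
      G.neighborSet a ∩ (X \ Yhat) = {b.1} := fun {a b} ha hb hab =>
    neighborSet_inter_eq_singleton_of_notMem_SVerts ha (fun h => a.2 (.inr (hS h)))
      ⟨hab, of_not_not fun hbX => hb (C.mem_image_supp_of_adj ha hbX hab),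
        fun h => b.2 (.inl h)⟩
  refine isAcyclic_of_induce_of_unique_exit A (isAcyclic_induce_induce hAin hYstar)
    (isAcyclic_induce_induce hAout hYhat) ?_
  intro a a' b b' ha ha' hb hb' hab hab' hreach
  have hT_of_exit : ∀ {a b : ↥(Yhat ∪ Ystar)ᶜ}, a ∈ A → b ∉ A → G.Adj a b →
      a.1 ∈ TVerts G CV (X \ Yhat) := fun ha hb hab =>
    ⟨ha, by rw [hexit_nbhd ha hb hab, Set.ncard_singleton]⟩
  have haa' : a = a' := Subtype.ext <| hT _ _ (hAin ha) (hAin ha') (hT_of_exit ha hb hab)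
    (hT_of_exit ha' hb' hab') (hreach.map (induceHom (Embedding.induce _).toHom hAin))
  subst haa'
  refine ⟨rfl, Subtype.ext ?_⟩
  exact Set.singleton_eq_singleton_iff.1
    ((hexit_nbhd ha hb hab).symm.trans (hexit_nbhd ha hb' hab'))

theorem stmt6 (V : Type) [Fintype V] (G : SimpleGraph V) (X : Set V)
    (C : (G.induce Xᶜ).ConnectedComponent)
    (Yhat Ystar : Set V)
    (hYhat_sub : Yhat ⊆ (Subtype.val '' C.supp)ᶜ)
    (hYhat : (G.induce ((Subtype.val '' C.supp)ᶜ \ Yhat)).IsAcyclic)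
    (hYstar_sub : Ystar ⊆ Subtype.val '' C.supp)
    (hYstar : (G.induce (Subtype.val '' C.supp \ Ystar)).IsAcyclic)
    (hS : SVerts G (Subtype.val '' C.supp) (X \ Yhat) ⊆ Ystar)
    (hT : SeparatedIn G (Subtype.val '' C.supp \ Ystar)
      (TVerts G (Subtype.val '' C.supp) (X \ Yhat))) :
    IsFVS G (Yhat ∪ Ystar) :=
  stmt6_general V G X C Yhat Ystar hYhat hYstar hS hT
end

section
/- Let G be a graph, X ⊆ V(G), and let 𝒞 be the set of connected components of G − X. Let Y be a feedback vertex set of G and let X* ⊆ X \ Y. Then there are at most |X*| − 1 components C ∈ 𝒞 such that Y ∩ V(C) misses a vertex of 𝒮_G(C, X*) or leaves two vertices of 𝒯_G(C, X*) in the same connected component of C − Y. -/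
/-! Every component `C` counted on the left yields a path of the forest `G - Y` between two
distinct vertices of `X*` whose other vertices lie in `C`: either through a vertex of
`𝒮(C, X*)` outside `Y` and two of its neighbours in `X*`, or through a path of `C - Y` joining
two vertices of `𝒯(C, X*)` and their neighbours in `X*` (which differ, or they would close a
cycle). Paths of distinct components meet only in `X*`. Deleting an inner vertex `v` of one
path splits `X*` into the vertices reachable from its first endpoint while avoiding `v` and the
rest; each other path lies on one side, so by induction there are at most `|X*| - 1` paths. -/

open Finset

namespace SimpleGraph

variable {W : Type*} {F : SimpleGraph W}

def reachAvoiding (F : SimpleGraph W) (v a : W) : Set W :=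
  {s | ∃ p : F.Walk a s, v ∉ p.support}

lemma mem_reachAvoiding_self {v a : W} (h : a ≠ v) : a ∈ F.reachAvoiding v a :=
  ⟨.nil, by simpa using h.symm⟩

lemma Walk.mem_reachAvoiding_iff_of_mem_support {v a u w x : W} (p : F.Walk u w)
    (hv : v ∉ p.support) (hx : x ∈ p.support) :
    x ∈ F.reachAvoiding v a ↔ u ∈ F.reachAvoiding v a := by
  classical
  have hsub := p.support_takeUntil_subset_support hx
  constructor
  · rintro ⟨q, hq⟩
    refine ⟨q.append (p.takeUntil x hx).reverse, ?_⟩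
    rw [Walk.mem_support_append_iff, Walk.support_reverse, List.mem_reverse]
    exact fun h => h.elim hq fun h => hv (hsub h)
  · rintro ⟨q, hq⟩
    refine ⟨q.append (p.takeUntil x hx), ?_⟩
    rw [Walk.mem_support_append_iff]
    exact fun h => h.elim hq fun h => hv (hsub h)

lemma IsAcyclic.notMem_reachAvoiding (hF : F.IsAcyclic) {v a b : W} {p : F.Walk a b}
    (hp : p.IsPath) (hv : v ∈ p.support) : b ∉ F.reachAvoiding v a := by
  classical
  rintro ⟨q, hq⟩
  have : q.toPath = ⟨p, hp⟩ := (hF.subsingleton_path a b).elim _ _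
  exact hq (q.support_toPath_subset_support (this ▸ hv))

theorem IsAcyclic.card_le_ncard_sub_one_of_isPath {ι : Type*} (hF : F.IsAcyclic) {a b : ι → W}
    (P : ∀ i, F.Walk (a i) (b i)) (I : Finset ι) {S : Set W} (hS : S.Finite)
    (hpath : ∀ i ∈ I, (P i).IsPath) (ha : ∀ i ∈ I, a i ∈ S) (hb : ∀ i ∈ I, b i ∈ S)
    (hout : ∀ i ∈ I, ∃ v ∈ (P i).support, v ∉ S)
    (hdisj : (I : Set ι).Pairwise fun i j => ∀ x ∈ (P i).support, x ∈ (P j).support → x ∈ S) :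
    #I ≤ S.ncard - 1 := by
  classical
  induction I using Finset.strongInduction generalizing S with
  | _ I ih =>
  obtain rfl | ⟨i₀, hi₀⟩ := I.eq_empty_or_nonempty
  · simp
  obtain ⟨v, hvP, hvS⟩ := hout i₀ hi₀
  set R := F.reachAvoiding v (a i₀)
  have hside : ∀ j ∈ I.erase i₀, ∀ x ∈ (P j).support, x ∈ R ↔ a j ∈ R := by
    intro j hj x hx
    refine (P j).mem_reachAvoiding_iff_of_mem_support (fun hvj => hvS ?_) hx
    exact hdisj hi₀ (mem_of_mem_erase hj) (ne_of_mem_erase hj).symm v hvP hvj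
  have hpart : ∀ T : Set W, (∀ j ∈ I.erase i₀, ∀ x ∈ (P j).support, x ∈ T ↔ a j ∈ T) →
      #((I.erase i₀).filter (a · ∈ T)) ≤ (S ∩ T).ncard - 1 := by
    intro T hT
    have hsub : (I.erase i₀).filter (a · ∈ T) ⊆ I.erase i₀ := filter_subset _ _
    have hI : ∀ j ∈ (I.erase i₀).filter (a · ∈ T), j ∈ I := fun j hj =>
      mem_of_mem_erase (hsub hj)
    have hT' : ∀ j ∈ (I.erase i₀).filter (a · ∈ T), ∀ x ∈ (P j).support, x ∈ T :=
      fun j hj x hx => (hT j (hsub hj) x hx).mpr (mem_filter.mp hj).2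
    refine ih _ (hsub.trans_ssubset (erase_ssubset hi₀)) (hS.inter_of_left T)
      (fun j hj => hpath j (hI j hj))
      (fun j hj => ⟨ha j (hI j hj), hT' j hj _ (P j).start_mem_support⟩)
      (fun j hj => ⟨hb j (hI j hj), hT' j hj _ (P j).end_mem_support⟩)
      (fun j hj => ?_) ?_
    · obtain ⟨w, hw, hwS⟩ := hout j (hI j hj)
      exact ⟨w, hw, fun h => hwS h.1⟩
    · intro i hi j hj hij x hxi hxj
      exact ⟨hdisj (hI i hi) (hI j hj) hij x hxi hxj, hT' i hi x hxi⟩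
  have hR := hpart R hside
  have hRc := hpart Rᶜ fun j hj x hx => not_congr (hside j hj x hx)
  have ha₀ : a i₀ ∈ S ∩ R := ⟨ha i₀ hi₀, mem_reachAvoiding_self fun h => hvS (h ▸ ha i₀ hi₀)⟩
  have hb₀ : b i₀ ∈ S ∩ Rᶜ := ⟨hb i₀ hi₀, hF.notMem_reachAvoiding (hpath i₀ hi₀) hvP⟩
  have hpos : 0 < (S ∩ R).ncard := (Set.ncard_pos (hS.inter_of_left R)).mpr ⟨_, ha₀⟩
  have hpos' : 0 < (S ∩ Rᶜ).ncard := (Set.ncard_pos (hS.inter_of_left Rᶜ)).mpr ⟨_, hb₀⟩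
  have hScard := Set.ncard_inter_add_ncard_sdiff_eq_ncard S R hS
  rw [Set.sdiff_eq] at hScard
  have hIcard := card_filter_add_card_filter_not (s := I.erase i₀) (a · ∈ R)
  have := card_erase_add_one hi₀
  simp only [Set.mem_compl_iff] at hRc
  omega

lemma IsAcyclic.eq_of_adj_of_isPath (hF : F.IsAcyclic) {x t₁ t₂ : W} {q : F.Walk t₁ t₂}
    (hq : q.IsPath) (hx : x ∉ q.support) (h₁ : F.Adj x t₁) (h₂ : F.Adj x t₂) : t₁ = t₂ := by
  have := hF.eq_snd_of_adj_start (p := .cons h₁ q) (hq.cons hx) h₂ (by simp)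
  rwa [Walk.snd_cons, eq_comm] at this

lemma exists_isPath_of_isPath_of_adj {S A : Set W} (hSA : Disjoint S A) {x₁ x₂ t₁ t₂ : W}
    {q : F.Walk t₁ t₂} (hq : q.IsPath) (hqA : ∀ z ∈ q.support, z ∈ A)
    (hx₁ : x₁ ∈ S) (hx₂ : x₂ ∈ S) (hne : x₁ ≠ x₂) (h₁ : F.Adj x₁ t₁) (h₂ : F.Adj t₂ x₂) :
    ∃ p : F.Walk x₁ x₂, p.IsPath ∧ (∃ z ∈ p.support, z ∉ S) ∧ ∀ z ∈ p.support, z ∉ S → z ∈ A := by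
  have hqS : ∀ z ∈ q.support, z ∉ S := fun z hz hzS => hSA.notMem_of_mem_left hzS (hqA z hz)
  refine ⟨.cons h₁ (q.concat h₂), (hq.concat (hqS _ · hx₂) h₂).cons ?_,
    ⟨t₁, by simp, hqS _ q.start_mem_support⟩, ?_⟩
  · simpa [Walk.support_concat, hne] using (hqS _ · hx₁)
  · simp only [Walk.support_cons, Walk.support_concat, List.mem_cons, List.mem_append,
      List.not_mem_nil, or_false]
    rintro z (rfl | hz | rfl) hzS
    exacts [absurd hx₁ hzS, hqA z hz, absurd hx₂ hzS]

lemma exists_isPath_induce_compl_of_reachable {V : Type*} {G : SimpleGraph V} {A Y : Set V}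
    {u v : V} {hu : u ∈ A \ Y} {hv : v ∈ A \ Y}
    (h : (G.induce (A \ Y)).Reachable ⟨u, hu⟩ ⟨v, hv⟩) :
    ∃ q : (G.induce Yᶜ).Walk ⟨u, hu.2⟩ ⟨v, hv.2⟩, q.IsPath ∧ ∀ z ∈ q.support, ↑z ∈ A := by
  classical
  let f := G.induceHomOfLE (s := A \ Y) (s' := Yᶜ) fun _ hz => hz.2
  obtain ⟨p⟩ := h
  have hsupp : ∀ z ∈ (p.toPath.1.map f.toHom).support, ↑z ∈ A := by
    intro z hz
    rw [Walk.support_map, List.mem_map] at hz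
    obtain ⟨z, -, rfl⟩ := hz
    exact z.2.1
  exact ⟨_, p.toPath.2.map f.injective, hsupp⟩

lemma ConnectedComponent.eq_of_mem_image_val {V : Type*} {G : SimpleGraph V} {s : Set V}
    {C C' : (G.induce s).ConnectedComponent} {v : V}
    (h : v ∈ Subtype.val '' C.supp) (h' : v ∈ Subtype.val '' C'.supp) : C = C' := by
  obtain ⟨c, hc, rfl⟩ := h
  obtain ⟨c', hc', hcc'⟩ := h'
  exact ConnectedComponent.eq_of_common_vertex hc (Subtype.ext hcc' ▸ hc')

end SimpleGraph

open SimpleGraph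

def LinksThrough {V : Type} (G : SimpleGraph V) (Y Xstar CV : Set V) : Prop :=
  ∃ (x y : ↥Yᶜ) (p : (G.induce Yᶜ).Walk x y), p.IsPath ∧ ↑x ∈ Xstar ∧ ↑y ∈ Xstar ∧
    (∃ z ∈ p.support, ↑z ∉ Xstar) ∧ ∀ z ∈ p.support, ↑z ∉ Xstar → ↑z ∈ CV

section

variable {V : Type} {G : SimpleGraph V} {X Y Xstar : Set V}

lemma disjoint_preimage_image_supp (hX : Xstar ⊆ X) (C : (G.induce Xᶜ).ConnectedComponent) :
    Disjoint (Subtype.val ⁻¹' Xstar : Set ↥Yᶜ) (Subtype.val ⁻¹' (Subtype.val '' C.supp)) :=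
  (disjoint_compl_right.mono hX (Subtype.coe_image_subset _ _)).preimage _

lemma linksThrough_of_not_sVerts_subset (hsub : Xstar ⊆ X \ Y)
    {C : (G.induce Xᶜ).ConnectedComponent} (hS : ¬ SVerts G (Subtype.val '' C.supp) Xstar ⊆ Y) :
    LinksThrough G Y Xstar (Subtype.val '' C.supp) := by
  obtain ⟨u, ⟨huC, hu⟩, huY⟩ := Set.not_subset.mp hS
  obtain ⟨x₁, x₂, ⟨hx₁, hx₁X⟩, ⟨hx₂, hx₂X⟩, hne⟩ :=
    (Set.one_lt_ncard_iff (Set.finite_of_ncard_pos (by omega))).mp hu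
  obtain ⟨p, hp, hout, hin⟩ := exists_isPath_of_isPath_of_adj (F := G.induce Yᶜ)
    (x₁ := ⟨x₁, (hsub hx₁X).2⟩) (x₂ := ⟨x₂, (hsub hx₂X).2⟩) (t₁ := ⟨u, huY⟩)
    (disjoint_preimage_image_supp (fun _ h => (hsub h).1) C) .nil
    (by simpa using huC) hx₁X hx₂X (by simpa using hne) hx₁.symm hx₂
  exact ⟨_, _, p, hp, hx₁X, hx₂X, hout, hin⟩

lemma linksThrough_of_not_separatedIn (hY : IsFVS G Y) (hsub : Xstar ⊆ X \ Y)
    {C : (G.induce Xᶜ).ConnectedComponent}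
    (hT : ¬ SeparatedIn G (Subtype.val '' C.supp \ Y) (TVerts G (Subtype.val '' C.supp) Xstar)) :
    LinksThrough G Y Xstar (Subtype.val '' C.supp) := by
  have hdisj := disjoint_preimage_image_supp (Y := Y) (fun _ h => (hsub h).1) C
  simp only [SeparatedIn, not_forall] at hT
  obtain ⟨t₁, t₂, ht₁, ht₂, ⟨-, hT₁⟩, ⟨-, hT₂⟩, hr, hne⟩ := hT
  obtain ⟨q, hq, hqC⟩ := exists_isPath_induce_compl_of_reachable hr
  obtain ⟨x₁, hx₁⟩ := Set.ncard_eq_one.mp hT₁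
  obtain ⟨x₂, hx₂⟩ := Set.ncard_eq_one.mp hT₂
  have hx₁' : x₁ ∈ G.neighborSet t₁ ∩ Xstar := hx₁ ▸ rfl
  have hx₂' : x₂ ∈ G.neighborSet t₂ ∩ Xstar := hx₂ ▸ rfl
  have hx₁q : (⟨x₁, (hsub hx₁'.2).2⟩ : ↥Yᶜ) ∉ q.support := fun h =>
    hdisj.notMem_of_mem_left hx₁'.2 (hqC _ h)
  have hne' : (⟨x₁, (hsub hx₁'.2).2⟩ : ↥Yᶜ) ≠ ⟨x₂, (hsub hx₂'.2).2⟩ := fun hx =>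
    hne (congrArg Subtype.val (hY.eq_of_adj_of_isPath hq hx₁q hx₁'.1.symm (hx ▸ hx₂'.1.symm)))
  obtain ⟨p, hp, hout, hin⟩ :=
    exists_isPath_of_isPath_of_adj hdisj hq hqC hx₁'.2 hx₂'.2 hne' hx₁'.1.symm hx₂'.1
  exact ⟨_, _, p, hp, hx₁'.2, hx₂'.2, hout, hin⟩

lemma ncard_le_of_forall_linksThrough [Finite V] (hY : IsFVS G Y) (hXY : Xstar ⊆ Yᶜ)
    (B : Set (G.induce Xᶜ).ConnectedComponent)
    (hB : ∀ C ∈ B, LinksThrough G Y Xstar (Subtype.val '' C.supp)) :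
    B.ncard ≤ Xstar.ncard - 1 := by
  have := Fintype.ofFinite B
  choose x y p hp hx hy hout hin using fun C : B => hB C.1 C.2
  have hdisj : ((univ : Finset B) : Set B).Pairwise fun C C' =>
      ∀ z ∈ (p C).support, z ∈ (p C').support → ↑z ∈ Xstar := by
    intro C _ C' _ hCC' z hz hz'
    by_contra hzX
    exact hCC' (Subtype.ext (ConnectedComponent.eq_of_mem_image_val (hin C z hz hzX)
      (hin C' z hz' hzX)))
  have := IsAcyclic.card_le_ncard_sub_one_of_isPath hY p univ (S := Subtype.val ⁻¹' Xstar)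
    (Set.toFinite _) (fun C _ => hp C) (fun C _ => hx C) (fun C _ => hy C) (fun C _ => hout C)
    hdisj
  rwa [card_univ, ← Nat.card_eq_fintype_card, Nat.card_coe_set_eq,
    Set.ncard_preimage_of_injective_subset_range Subtype.val_injective
      (Subtype.range_coe.symm ▸ hXY)] at this

end

theorem stmt8 (V : Type) [Fintype V] (G : SimpleGraph V) (X : Set V)
    (Y : Set V) (hY : IsFVS G Y) (Xstar : Set V) (hsub : Xstar ⊆ X \ Y) :
    {C : (G.induce Xᶜ).ConnectedComponent |
        ¬ SVerts G (Subtype.val '' C.supp) Xstar ⊆ Y ∨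
        ¬ SeparatedIn G (Subtype.val '' C.supp \ Y)
            (TVerts G (Subtype.val '' C.supp) Xstar)}.ncard
      ≤ Xstar.ncard - 1 :=
  ncard_le_of_forall_linksThrough hY (fun _ h => (hsub h).2) _ fun _ hC =>
    hC.elim (linksThrough_of_not_sVerts_subset hsub) (linksThrough_of_not_separatedIn hY hsub)
end

section
/- Let G be a tree and let T ⊆ V(G). If Z ⊆ V(G) is a minimum vertex multiway cut of T of size k (i.e., Z has minimum size among sets whose removal leaves every connected component of G − Z with at most one vertex of T \ Z), then there exists a collection of k pairwise vertex-disjoint T-paths in G. -/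
/-- `Z` is a vertex multiway cut of the terminal set `T` in `G`: every connected
component of `G - Z` contains at most one vertex of `T \ Z`. -/
def IsMultiwayCut {V : Type} (G : SimpleGraph V) (T Z : Set V) : Prop :=
  SeparatedIn G Zᶜ (T \ Z)

theorem separatedIn_iff_forall_walk {V : Type} {G : SimpleGraph V} {S T : Set V} :
    SeparatedIn G S T ↔
      ∀ a b, a ∈ T → b ∈ T → ∀ p : G.Walk a b, (∀ x ∈ p.support, x ∈ S) → a = b := by
  constructor
  · intro h a b ha hb p hp
    exact h a b (hp a p.start_mem_support) (hp b p.end_mem_support) ha hb ⟨p.induce S hp⟩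
  · rintro h a b haS hbS ha hb ⟨p⟩
    refine h a b ha hb (p.map (SimpleGraph.Embedding.induce S).toHom) fun x hx => ?_
    obtain ⟨y, -, rfl⟩ := List.mem_map.mp (p.support_map _ ▸ hx)
    exact y.2

theorem SeparatedIn.mono {V : Type} {G : SimpleGraph V} {S S' T T' : Set V}
    (h : SeparatedIn G S T) (hS : S' ⊆ S) (hT : T' ⊆ T) : SeparatedIn G S' T' := by
  rw [separatedIn_iff_forall_walk] at h ⊢
  exact fun a b ha hb p hp => h a b (hT ha) (hT hb) p fun x hx => hS (hp x hx)

namespace SimpleGraph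

variable {V : Type} {G : SimpleGraph V}

theorem Walk.IsPath.append {u v w : V} {p : G.Walk u v} {q : G.Walk v w}
    (hp : p.IsPath) (hq : q.IsPath) (h : ∀ x ∈ p.support, x ∈ q.support → x = v) :
    (p.append q).IsPath := by
  rw [Walk.isPath_def, Walk.support_append]
  have hq' := hq.support_nodup
  rw [← Walk.cons_tail_support q, List.nodup_cons] at hq'
  refine hp.support_nodup.append hq'.2 fun x hxp hxq => ?_
  obtain rfl := h x hxp (Walk.cons_tail_support q ▸ List.mem_cons_of_mem _ hxq)
  exact hq'.1 hxq

section DisjointTPaths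

def HasDisjointTPaths (G : SimpleGraph V) (T A : Set V) (m : ℕ) : Prop :=
  ∃ (u v : Fin m → V) (p : ∀ i : Fin m, G.Walk (u i) (v i)),
    (∀ i, (p i).IsPath) ∧ (∀ i, u i ∈ T ∧ v i ∈ T ∧ u i ≠ v i) ∧
    (∀ i j, i ≠ j → ((p i).support).Disjoint ((p j).support)) ∧
    ∀ i, ∀ x ∈ (p i).support, x ∈ A

variable {T A B : Set V} {m : ℕ}

theorem hasDisjointTPaths_zero : G.HasDisjointTPaths T A 0 :=
  ⟨Fin.elim0, Fin.elim0, fun i => i.elim0, fun i => i.elim0, fun i => i.elim0,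
    fun i => i.elim0, fun i => i.elim0⟩

theorem HasDisjointTPaths.of_le {k : ℕ} (h : G.HasDisjointTPaths T A m) (hk : k ≤ m) :
    G.HasDisjointTPaths T A k := by
  obtain ⟨u, v, p, hp, huv, hdisj, hA⟩ := h
  exact ⟨fun i => u (Fin.castLE hk i), fun i => v (Fin.castLE hk i),
    fun i => p (Fin.castLE hk i), fun i => hp _, fun i => huv _,
    fun i j hij => hdisj _ _ ((Fin.castLE_injective hk).ne hij), fun i => hA _⟩

theorem HasDisjointTPaths.cons (h : G.HasDisjointTPaths T A m) {a b : V} {q : G.Walk a b}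
    (hq : q.IsPath) (ha : a ∈ T) (hb : b ∈ T) (hab : a ≠ b) (hAB : A ⊆ B)
    (hqB : ∀ x ∈ q.support, x ∈ B) (hqA : ∀ x ∈ q.support, x ∉ A) :
    G.HasDisjointTPaths T B (m + 1) := by
  obtain ⟨u, v, p, hp, huv, hdisj, hA⟩ := h
  have hq_disj : ∀ i, q.support.Disjoint (p i).support :=
    fun i x hxq hxp => hqA x hxq (hA i x hxp)
  refine ⟨Fin.cons a u, Fin.cons b v, Fin.cons q p, ?_, ?_, ?_, ?_⟩
  · exact Fin.cases hq hp
  · exact Fin.cases ⟨ha, hb, hab⟩ huv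
  · intro i j hij
    induction i using Fin.cases <;> induction j using Fin.cases
    · exact absurd rfl hij
    · exact hq_disj _
    · exact (hq_disj _).symm
    · exact hdisj _ _ (fun h => hij (congrArg _ h))
  · exact Fin.cases hqB fun i x hx => hAB (hA i x hx)

end DisjointTPaths

namespace IsTree

variable (hG : G.IsTree)

noncomputable def path (a b : V) : G.Walk a b := (hG.existsUnique_path a b).choose

theorem isPath_path (a b : V) : (hG.path a b).IsPath :=
  (hG.existsUnique_path a b).choose_spec.1

variable {hG}

theorem eq_path {a b : V} {p : G.Walk a b} (hp : p.IsPath) : p = hG.path a b :=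
  (hG.existsUnique_path a b).choose_spec.2 p hp

theorem support_path_subset {a b : V} (p : G.Walk a b) :
    (hG.path a b).support ⊆ p.support := by
  classical
  rw [← eq_path p.toPath.2]
  exact p.support_toPath_subset_support

theorem takeUntil_path [DecidableEq V] {a b c : V} (h : c ∈ (hG.path a b).support) :
    (hG.path a b).takeUntil c h = hG.path a c :=
  eq_path ((hG.isPath_path a b).takeUntil h)

theorem dropUntil_path [DecidableEq V] {a b c : V} (h : c ∈ (hG.path a b).support) :
    (hG.path a b).dropUntil c h = hG.path c b :=
  eq_path ((hG.isPath_path a b).dropUntil h)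

theorem mem_support_path_of_support_inter {v a b : V}
    (h : ∀ x ∈ (hG.path v a).support, x ∈ (hG.path v b).support → x = v) :
    v ∈ (hG.path a b).support := by
  have hpath : ((hG.path v a).reverse.append (hG.path v b)).IsPath :=
    (hG.isPath_path v a).reverse.append (hG.isPath_path v b)
      fun x hx => h x (by simpa using hx)
  rw [← eq_path hpath]
  simp

variable (hG) in
/-- The vertices below `v` in the tree rooted at `r`. -/
def subtree (r v : V) : Set V := {x | v ∈ (hG.path r x).support}

variable {r v w a b : V}

theorem mem_subtree_self : v ∈ hG.subtree r v := (hG.path r v).end_mem_support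

theorem subtree_root : hG.subtree r r = Set.univ :=
  Set.eq_univ_of_forall fun x => (hG.path r x).start_mem_support

theorem subtree_subset (hw : w ∈ hG.subtree r v) : hG.subtree r w ⊆ hG.subtree r v := by
  classical
  intro x hx
  exact (takeUntil_path hx ▸ (hG.path r x).support_takeUntil_subset_support hx) hw

theorem support_path_subset_of_mem_subtree (ha : a ∈ hG.subtree r v) :
    (hG.path v a).support ⊆ (hG.path r a).support := by
  classical
  exact dropUntil_path ha ▸ (hG.path r a).support_dropUntil_subset_support ha

theorem length_path_lt_of_mem_subtree (hw : w ∈ hG.subtree r v) (hne : w ≠ v) :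
    (hG.path r v).length < (hG.path r w).length := by
  classical
  exact takeUntil_path hw ▸ Walk.length_takeUntil_lt_length hw hne.symm

theorem mem_support_of_mem_subtree_of_notMem (p : G.Walk a b) (ha : a ∈ hG.subtree r v)
    (hb : b ∉ hG.subtree r v) : v ∈ p.support := by
  -- `v` is on the path from `r` to `a`, hence on the walk `r ⇝ b ⇝ a`, but not on the path to `b`.
  have hv := support_path_subset ((hG.path r b).append p.reverse) ha
  rw [Walk.mem_support_append_iff, Walk.support_reverse, List.mem_reverse] at hv
  exact hv.resolve_left hb

theorem support_path_subset_subtree (ha : a ∈ hG.subtree r v) (hb : b ∈ hG.subtree r v) :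
    ∀ x ∈ (hG.path a b).support, x ∈ hG.subtree r v := by
  classical
  intro x hx
  by_contra hxv
  have hpath := hG.isPath_path a b
  rw [← (hG.path a b).take_spec hx] at hpath
  refine hpath.ne_of_mem_support_of_append (fun h => hxv (h ▸ mem_subtree_self))
    (mem_support_of_mem_subtree_of_notMem _ ha hxv) ?_ rfl
  simpa using
    mem_support_of_mem_subtree_of_notMem ((hG.path a b).dropUntil x hx).reverse hb hxv

theorem exists_common_subtree_of_notMem_support_path (ha : a ∈ hG.subtree r v)
    (hb : b ∈ hG.subtree r v) (hv : v ∉ (hG.path a b).support) :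
    ∃ w ∈ hG.subtree r v, w ≠ v ∧ a ∈ hG.subtree r w ∧ b ∈ hG.subtree r w := by
  by_contra! h
  refine hv (mem_support_path_of_support_inter fun x hxa hxb => ?_)
  by_contra hxv
  exact h x (support_path_subset_subtree mem_subtree_self ha x hxa) hxv
    (support_path_subset_of_mem_subtree ha hxa) (support_path_subset_of_mem_subtree hb hxb)

theorem separatedIn_diff_insert {T A Z : Set V}
    (hv : ∀ w ∈ hG.subtree r v, w ≠ v → (T ∩ A ∩ hG.subtree r w).Subsingleton)
    (hsep : SeparatedIn G ((A \ hG.subtree r v) \ Z) T) : SeparatedIn G (A \ insert v Z) T := by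
  classical
  rw [separatedIn_iff_forall_walk] at hsep ⊢
  intro a b ha hb p hp
  have hvp : v ∉ p.support := fun h => (hp v h).2 (Set.mem_insert v Z)
  by_cases hav : a ∈ hG.subtree r v
  · have hbv : b ∈ hG.subtree r v :=
      by_contra fun hbv => hvp (mem_support_of_mem_subtree_of_notMem p hav hbv)
    obtain ⟨w, hw, hwv, haw, hbw⟩ := exists_common_subtree_of_notMem_support_path hav hbv
      fun h => hvp (support_path_subset p h)
    exact hv w hw hwv ⟨⟨ha, (hp a p.start_mem_support).1⟩, haw⟩
      ⟨⟨hb, (hp b p.end_mem_support).1⟩, hbw⟩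
  · refine hsep a b ha hb p fun x hx => ⟨⟨(hp x hx).1, fun hxv => hvp ?_⟩,
      fun hxZ => (hp x hx).2 (Set.mem_insert_of_mem v hxZ)⟩
    have := mem_support_of_mem_subtree_of_notMem (p.takeUntil x hx).reverse hxv hav
    exact p.support_takeUntil_subset_support hx (by simpa using this)

variable (hG r) in
theorem exists_hasDisjointTPaths_separatedIn [Finite V] (T A : Set V)
    (hA : ∀ x ∈ A, ∀ y ∈ (hG.path r x).support, y ∈ A) :
    ∃ m, G.HasDisjointTPaths T A m ∧ ∃ Z : Set V, Z.ncard ≤ m ∧ SeparatedIn G (A \ Z) T := by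
  induction A using WellFoundedLT.induction with
  | _ A ih =>
  by_cases hTA : (T ∩ A).Subsingleton
  · refine ⟨0, hasDisjointTPaths_zero, ∅, by simp, ?_⟩
    rw [separatedIn_iff_forall_walk]
    exact fun a b ha hb p hp =>
      hTA ⟨ha, (hp a p.start_mem_support).1⟩ ⟨hb, (hp b p.end_mem_support).1⟩
  set S := {w | (T ∩ A ∩ hG.subtree r w).Nontrivial}
  have hrS : r ∈ S := by simpa [S, subtree_root] using Set.not_subsingleton_iff.mp hTA
  obtain ⟨v, hvS, hv_deepest⟩ :=
    S.exists_max_image (fun w => (hG.path r w).length) S.toFinite ⟨r, hrS⟩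
  obtain ⟨a, ⟨⟨haT, haA⟩, hav⟩, b, ⟨⟨hbT, hbA⟩, hbv⟩, hab⟩ := hvS
  have hvA : v ∈ A := hA a haA v hav
  have hA'A : A \ hG.subtree r v < A :=
    Set.sdiff_ssubset_left_iff.mpr ⟨v, hvA, mem_subtree_self⟩
  have hA' : ∀ x ∈ A \ hG.subtree r v, ∀ y ∈ (hG.path r x).support, y ∈ A \ hG.subtree r v :=
    fun x hx y hy => ⟨hA x hx.1 y hy, fun hyv => hx.2 (subtree_subset hyv hy)⟩
  obtain ⟨m, hpaths, Z, hZ, hsep⟩ := ih _ hA'A hA'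
  refine ⟨m + 1, hpaths.cons (hG.isPath_path a b) haT hbT hab Set.sdiff_subset ?_ ?_,
    insert v Z, (Set.ncard_insert_le v Z).trans (by omega), separatedIn_diff_insert ?_ hsep⟩
  · intro x hx
    have := support_path_subset ((hG.path r a).reverse.append (hG.path r b)) hx
    rw [Walk.mem_support_append_iff, Walk.support_reverse, List.mem_reverse] at this
    exact this.elim (hA a haA x) (hA b hbA x)
  · exact fun x hx hxA' => hxA'.2 (support_path_subset_subtree hav hbv x hx)
  · intro w hw hwv
    by_contra hwS
    exact (hv_deepest w (Set.not_subsingleton_iff.mp hwS)).not_gt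
      (length_path_lt_of_mem_subtree hw hwv)

end IsTree

end SimpleGraph

theorem stmt9_general (V : Type) [Fintype V] (G : SimpleGraph V)
    (hconn : G.Connected) (hacyc : G.IsAcyclic)
    (T Z : Set V) (k : ℕ)
    (hcard : Z.ncard = k)
    (hmin : ∀ Z' : Set V, IsMultiwayCut G T Z' → Z.ncard ≤ Z'.ncard) :
    ∃ (u v : Fin k → V) (p : ∀ i : Fin k, G.Walk (u i) (v i)),
      (∀ i, (p i).IsPath) ∧
      (∀ i, u i ∈ T ∧ v i ∈ T ∧ u i ≠ v i) ∧
      (∀ i j, i ≠ j → ((p i).support).Disjoint ((p j).support)) := by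
  have hG : G.IsTree := ⟨hconn, hacyc⟩
  obtain ⟨r⟩ := hconn.nonempty
  obtain ⟨m, hpaths, Z', hZ'm, hsep⟩ :=
    hG.exists_hasDisjointTPaths_separatedIn r T Set.univ fun _ _ _ _ => trivial
  have hcut : IsMultiwayCut G T Z' := hsep.mono (fun x hx => ⟨trivial, hx⟩) Set.sdiff_subset
  obtain ⟨u, v, p, hp, huv, hdisj, -⟩ := hpaths.of_le (hcard ▸ (hmin Z' hcut).trans hZ'm)
  exact ⟨u, v, p, hp, huv, hdisj⟩

theorem stmt9 (V : Type) [Fintype V] (G : SimpleGraph V)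
    (hconn : G.Connected) (hacyc : G.IsAcyclic)
    (T Z : Set V) (k : ℕ)
    (hZ : IsMultiwayCut G T Z) (hcard : Z.ncard = k)
    (hmin : ∀ Z' : Set V, IsMultiwayCut G T Z' → Z.ncard ≤ Z'.ncard) :
    ∃ (u v : Fin k → V) (p : ∀ i : Fin k, G.Walk (u i) (v i)),
      (∀ i, (p i).IsPath) ∧
      (∀ i, u i ∈ T ∧ v i ∈ T ∧ u i ≠ v i) ∧
      (∀ i j, i ≠ j → ((p i).support).Disjoint ((p j).support)) :=
  stmt9_general V G hconn hacyc T Z k hcard hmin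
end

section
/- Let ℱ be a finite collection of finite connected graphs and let 𝒢 be a minor-closed graph family that contains ℱ-necklaces of arbitrarily large length. Then 𝒢 contains uniform ℱ-necklaces of arbitrarily large length; moreover, there exist a graph H ∈ ℱ and vertices x, y ∈ V(H) such that every uniform necklace with structure (H, x, y), of every length, belongs to 𝒢. -/
/-- `φ` is a minor model of `H` in `G`: branch sets are connected (hence nonempty) and
pairwise disjoint, and every edge of `H` is realized by an edge of `G` between the
corresponding branch sets. -/
def IsMinorModel {V W : Type} (G : SimpleGraph V) (H : SimpleGraph W) (φ : W → Set V) :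
    Prop :=
  (∀ w : W, (G.induce (φ w)).Connected) ∧
  (∀ w₁ w₂ : W, w₁ ≠ w₂ → Disjoint (φ w₁) (φ w₂)) ∧
  (∀ w₁ w₂ : W, H.Adj w₁ w₂ → ∃ x ∈ φ w₁, ∃ y ∈ φ w₂, G.Adj x y)

/-- `H` is a minor of `G`. -/
def IsMinorOf {W V : Type} (H : SimpleGraph W) (G : SimpleGraph V) : Prop :=
  ∃ φ : W → Set V, IsMinorModel G H φ
/-- `G` is an `F`-necklace of length `t` with beads `S 0, …, S (t-1)`: the beads
partition `V(G)`, each bead induces a graph isomorphic to a member of the family `F`,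
there is exactly one edge between consecutive beads, and there are no edges between any
other pair of beads. -/
def IsNecklaceWith {V κ : Type} {β : κ → Type} (F : ∀ i : κ, SimpleGraph (β i))
    (G : SimpleGraph V) (t : ℕ) (S : Fin t → Set V) : Prop :=
  (∀ v : V, ∃ i : Fin t, v ∈ S i) ∧
  (∀ i j : Fin t, i ≠ j → Disjoint (S i) (S j)) ∧
  (∀ i : Fin t, ∃ b : κ, Nonempty ((G.induce (S i)) ≃g F b)) ∧
  (∀ i j : Fin t, (j : ℕ) = (i : ℕ) + 1 →
    ∃! p : V × V, p.1 ∈ S i ∧ p.2 ∈ S j ∧ G.Adj p.1 p.2) ∧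
  (∀ i j : Fin t, (i : ℕ) + 1 < (j : ℕ) →
    ∀ x ∈ S i, ∀ y ∈ S j, ¬ G.Adj x y)

/-- `G` is an `F`-necklace of length `t`. -/
def IsNecklace {V κ : Type} {β : κ → Type} (F : ∀ i : κ, SimpleGraph (β i))
    (G : SimpleGraph V) (t : ℕ) : Prop :=
  ∃ S : Fin t → Set V, IsNecklaceWith F G t S

/-- `G` is a uniform necklace with structure `(H, x, y)` of length `t`, with beads
`S 0, …, S (t-1)`: the beads partition `V(G)`, each bead induces a copy of `H`,
there is exactly one edge between consecutive beads and no edge between non-consecutive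
beads, and the isomorphisms can be chosen so that the unique edge between the `i`-th and
`(i+1)`-st beads joins the image of `x` in bead `i` to the image of `y` in bead `i+1`. -/
def IsUniformNecklaceWith {V W : Type} (H : SimpleGraph W) (x y : W)
    (G : SimpleGraph V) (t : ℕ) (S : Fin t → Set V) : Prop :=
  (∀ v : V, ∃ i : Fin t, v ∈ S i) ∧
  (∀ i j : Fin t, i ≠ j → Disjoint (S i) (S j)) ∧
  (∀ i j : Fin t, (j : ℕ) = (i : ℕ) + 1 →
    ∃! p : V × V, p.1 ∈ S i ∧ p.2 ∈ S j ∧ G.Adj p.1 p.2) ∧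
  (∀ i j : Fin t, (i : ℕ) + 1 < (j : ℕ) →
    ∀ a ∈ S i, ∀ b ∈ S j, ¬ G.Adj a b) ∧
  ∃ f : ∀ i : Fin t, H ≃g (G.induce (S i)),
    ∀ i j : Fin t, (j : ℕ) = (i : ℕ) + 1 →
      G.Adj ((f i) x).val ((f j) y).val

/-!
Every inner bead of an `F`-necklace has a type `(b, x, y)`: its isomorphism class `F b` together
with the endpoints `x` and `y` of the edges to the next and from the previous bead. There are
finitely many types, so a long necklace has many beads of one type, and they can be chosen
pairwise non-consecutive. Contracting each gap between two chosen beads into the `y`-vertex of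
the bead after it leaves the canonical uniform necklace with structure `(F b, x, y)` as a minor.
Shorter canonical necklaces are induced subgraphs of longer ones, so a type that occurs for
infinitely many lengths occurs for all of them; and every uniform necklace with that structure
is isomorphic to the canonical one.
-/

open SimpleGraph

theorem StrictMono.eq_of_mem_Ioc_castSucc_succ {α : Type} [LinearOrder α] {k : ℕ}
    {c : Fin (k + 1) → α} (hc : StrictMono c) {j₁ j₂ : Fin k} {a : α}
    (h₁ : a ∈ Set.Ioc (c j₁.castSucc) (c j₁.succ))
    (h₂ : a ∈ Set.Ioc (c j₂.castSucc) (c j₂.succ)) : j₁ = j₂ := by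
  rcases lt_trichotomy j₁ j₂ with h | h | h
  · exact absurd (h₂.1.trans_le' (hc.monotone (Fin.succ_le_castSucc_iff.mpr h))) h₁.2.not_gt
  · exact h
  · exact absurd (h₁.1.trans_le' (hc.monotone (Fin.succ_le_castSucc_iff.mpr h))) h₂.2.not_gt

theorem Fintype.exists_orderEmbedding_fiber {α β : Type} [LinearOrder α] [Fintype α] [Fintype β]
    (f : α → β) {k : ℕ} (h : Fintype.card β * k < Fintype.card α) :
    ∃ y, ∃ e : Fin (k + 1) ↪o α, ∀ m, f (e m) = y := by
  classical
  obtain ⟨y, hy⟩ := Fintype.exists_lt_card_fiber_of_mul_lt_card f h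
  obtain ⟨s, hs, hcard⟩ := Finset.exists_subset_card_eq hy
  exact ⟨y, s.orderEmbOfFin hcard, fun m =>
    (Finset.mem_filter.mp (hs (s.orderEmbOfFin_mem hcard m))).2⟩

theorem Finite.exists_forall_of_antitone {τ : Type} [Finite τ] {P : ℕ → τ → Prop}
    (hP : ∀ t, Antitone fun k => P k t) (h : ∀ k, ∃ t, P k t) : ∃ t, ∀ k, P k t := by
  choose f hf using h
  obtain ⟨t, ht⟩ := Finite.exists_infinite_fiber f
  refine ⟨t, fun k => ?_⟩
  obtain ⟨k', hk', hkk'⟩ := (Set.infinite_coe_iff.mp ht).exists_gt k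
  have hk' : f k' = t := hk'
  exact hP t hkk'.le (hk' ▸ hf k')

theorem SimpleGraph.induce_singleton_connected {V : Type} (G : SimpleGraph V) (v : V) :
    (G.induce {v}).Connected := by
  rw [induce_singleton_eq_top]
  exact connected_top

theorem SimpleGraph.Embedding.isMinorOf {V W : Type} {G : SimpleGraph V} {H : SimpleGraph W}
    (e : H ↪g G) : IsMinorOf H G :=
  ⟨fun w => {e w}, fun w => G.induce_singleton_connected (e w),
    fun _ _ hne => Set.disjoint_singleton.mpr (e.injective.ne hne),
    fun w₁ w₂ h => ⟨e w₁, rfl, e w₂, rfl, e.map_adj_iff.mpr h⟩⟩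

def uniformNecklace {W : Type} (H : SimpleGraph W) (x y : W) (t : ℕ) :
    SimpleGraph (Fin t × W) where
  Adj p q := (p.1 = q.1 ∧ H.Adj p.2 q.2) ∨
    ((q.1 : ℕ) = p.1 + 1 ∧ p.2 = x ∧ q.2 = y) ∨
    ((p.1 : ℕ) = q.1 + 1 ∧ p.2 = y ∧ q.2 = x)
  symm := by
    constructor
    rintro p q (⟨h₁, h₂⟩ | ⟨h₁, h₂, h₃⟩ | ⟨h₁, h₂, h₃⟩)
    · exact Or.inl ⟨h₁.symm, h₂.symm⟩
    · exact Or.inr (Or.inr ⟨h₁, h₃, h₂⟩)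
    · exact Or.inr (Or.inl ⟨h₁, h₃, h₂⟩)
  loopless := by
    constructor
    rintro p (⟨-, h⟩ | ⟨h, -⟩ | ⟨h, -⟩)
    · exact H.loopless.irrefl _ h
    all_goals omega

section UniformNecklace

variable {W : Type} {H : SimpleGraph W} {x y : W}

@[simp]
theorem uniformNecklace_adj {t : ℕ} {p q : Fin t × W} :
    (uniformNecklace H x y t).Adj p q ↔ (p.1 = q.1 ∧ H.Adj p.2 q.2) ∨
      ((q.1 : ℕ) = p.1 + 1 ∧ p.2 = x ∧ q.2 = y) ∨
      ((p.1 : ℕ) = q.1 + 1 ∧ p.2 = y ∧ q.2 = x) :=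
  Iff.rfl

theorem isUniformNecklaceWith_uniformNecklace (t : ℕ) :
    IsUniformNecklaceWith H x y (uniformNecklace H x y t) t (fun i => {p | p.1 = i}) := by
  refine ⟨fun p => ⟨p.1, rfl⟩, ?_, ?_, ?_, ?_⟩
  · intro i j hij
    exact Set.disjoint_left.mpr fun p hi hj => hij (hi.symm.trans hj)
  · intro i j hj
    refine ⟨((i, x), (j, y)), ⟨rfl, rfl, Or.inr (Or.inl ⟨hj, rfl, rfl⟩)⟩, ?_⟩
    rintro ⟨⟨i', w⟩, ⟨j', w'⟩⟩ ⟨hi, hj', hadj⟩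
    obtain ⟨rfl, rfl⟩ : i' = i ∧ j' = j := ⟨hi, hj'⟩
    simp only [uniformNecklace_adj] at hadj
    rcases hadj with ⟨rfl, -⟩ | ⟨-, rfl, rfl⟩ | ⟨h, -⟩
    · omega
    · rfl
    · omega
  · rintro i j hij ⟨i', w⟩ hi ⟨j', w'⟩ hj hadj
    obtain ⟨rfl, rfl⟩ : i' = i ∧ j' = j := ⟨hi, hj⟩
    simp only [uniformNecklace_adj] at hadj
    rcases hadj with ⟨rfl, -⟩ | ⟨h, -⟩ | ⟨h, -⟩ <;> omega
  · refine ⟨fun i => ⟨⟨fun w => ⟨(i, w), rfl⟩, fun p => p.1.2, fun _ => rfl,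
      fun ⟨p, hp⟩ => Subtype.ext (Prod.ext hp.symm rfl)⟩, ?_⟩,
      fun i j hj => Or.inr (Or.inl ⟨hj, rfl, rfl⟩)⟩
    intro w w'
    simp

def uniformNecklaceEmbedding {k k' : ℕ} (h : k ≤ k') :
    uniformNecklace H x y k ↪g uniformNecklace H x y k' where
  toFun p := (Fin.castLE h p.1, p.2)
  inj' p q hpq := by
    simp only [Prod.mk.injEq, Fin.castLE_inj] at hpq
    exact Prod.ext hpq.1 hpq.2
  map_rel_iff' {p q} := by
    change (uniformNecklace H x y k').Adj (Fin.castLE h p.1, p.2) (Fin.castLE h q.1, q.2) ↔ _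
    simp [Fin.ext_iff]

theorem uniformNecklace_isMinorOf_of_le {k k' : ℕ} (h : k ≤ k') :
    IsMinorOf (uniformNecklace H x y k) (uniformNecklace H x y k') :=
  (uniformNecklaceEmbedding h).isMinorOf

variable {V : Type} {G : SimpleGraph V} {t : ℕ} {S : Fin t → Set V}

theorem IsUniformNecklaceWith.nonempty_iso (hG : IsUniformNecklaceWith H x y G t S) :
    Nonempty (uniformNecklace H x y t ≃g G) := by
  obtain ⟨hcov, hdisj, huniq, hfar, f, hf⟩ := hG
  have hbead : ∀ {i j : Fin t} {v : V}, v ∈ S i → v ∈ S j → i = j := fun hi hj =>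
    by_contra fun hij => Set.disjoint_left.mp (hdisj _ _ hij) hi hj
  let ψ : Fin t × W → V := fun p => f p.1 p.2
  have hψ : Function.Bijective ψ := by
    refine ⟨fun ⟨i, w⟩ ⟨j, w'⟩ h => ?_, fun v => ?_⟩
    · have h : (f i w : V) = f j w' := h
      obtain rfl := hbead (f i w).2 (h ▸ (f j w').2)
      exact Prod.ext rfl ((f i).injective (Subtype.ext h))
    · obtain ⟨i, hi⟩ := hcov v
      exact ⟨(i, (f i).symm ⟨v, hi⟩), by simp [ψ]⟩
  have hnext : ∀ {i j : Fin t} {w w' : W}, (j : ℕ) = i + 1 →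
      (G.Adj (ψ (i, w)) (ψ (j, w')) ↔ w = x ∧ w' = y) := by
    intro i j w w' hj
    refine ⟨fun h => ?_, fun ⟨hw, hw'⟩ => hw ▸ hw' ▸ hf i j hj⟩
    obtain ⟨_, -, hu⟩ := huniq i j hj
    have e := (hu (f i w, f j w') ⟨(f i w).2, (f j w').2, h⟩).trans
      (hu (f i x, f j y) ⟨(f i x).2, (f j y).2, hf i j hj⟩).symm
    simp only [Prod.mk.injEq] at e
    exact ⟨(f i).injective (Subtype.ext e.1), (f j).injective (Subtype.ext e.2)⟩
  have hle : ∀ {i j : Fin t} {w w' : W}, i ≤ j →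
      (G.Adj (ψ (i, w)) (ψ (j, w')) ↔ (uniformNecklace H x y t).Adj (i, w) (j, w')) := by
    intro i j w w' hij
    rcases (show (i : ℕ) = j ∨ (j : ℕ) = i + 1 ∨ (i : ℕ) + 1 < j by omega) with h | h | h
    · obtain rfl := Fin.ext h
      simp [ψ, ← (f i).map_adj_iff]
    · simp only [hnext h, uniformNecklace_adj]
      refine ⟨fun hw => Or.inr (Or.inl ⟨h, hw⟩), ?_⟩
      rintro (⟨rfl, -⟩ | ⟨-, hw⟩ | ⟨h', -⟩)
      exacts [by omega, hw, by omega]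
    · refine iff_of_false (hfar i j h _ (f i w).2 _ (f j w').2) ?_
      simp only [uniformNecklace_adj]
      rintro (⟨rfl, -⟩ | ⟨h', -⟩ | ⟨h', -⟩) <;> omega
  refine ⟨⟨Equiv.ofBijective ψ hψ, fun {p q} => ?_⟩⟩
  rcases le_total p.1 q.1 with h | h
  · exact hle h
  · exact (G.adj_comm _ _).trans ((hle h).trans ((uniformNecklace H x y t).adj_comm _ _))

end UniformNecklace

section Necklace

variable {κ : Type} {β : κ → Type} {F : ∀ b : κ, SimpleGraph (β b)} {V : Type}
  {G : SimpleGraph V} {n : ℕ} {S : Fin n → Set V}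

theorem IsNecklaceWith.eq_of_mem (hN : IsNecklaceWith F G n S) {i j : Fin n} {v : V}
    (hi : v ∈ S i) (hj : v ∈ S j) : i = j :=
  by_contra fun hij => Set.disjoint_left.mp (hN.2.1 _ _ hij) hi hj

theorem IsNecklaceWith.induce_connected (hF : ∀ b, (F b).Connected)
    (hN : IsNecklaceWith F G n S) (i : Fin n) : (G.induce (S i)).Connected := by
  obtain ⟨b, ⟨e⟩⟩ := hN.2.2.1 i
  exact e.connected_iff.mpr (hF b)

def necklaceSegment (S : Fin n → Set V) (a b : ℕ) : Set V :=
  {v | ∃ i : Fin n, a ≤ (i : ℕ) ∧ (i : ℕ) ≤ b ∧ v ∈ S i}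

theorem IsNecklaceWith.induce_necklaceSegment_connected (hF : ∀ b, (F b).Connected)
    (hN : IsNecklaceWith F G n S) {a b : ℕ} (hab : a ≤ b) (hb : b < n) :
    (G.induce (necklaceSegment S a b)).Connected := by
  induction b, hab using Nat.le_induction with
  | base =>
    have hS : necklaceSegment S a a = S ⟨a, hb⟩ := by
      ext v
      refine ⟨fun ⟨i, h₁, h₂, hv⟩ => ?_, fun hv => ⟨_, le_rfl, le_rfl, hv⟩⟩
      obtain rfl : i = ⟨a, hb⟩ := Fin.ext (le_antisymm h₂ h₁)
      exact hv
    rw [hS]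
    exact hN.induce_connected hF _
  | succ b hab ih =>
    have hS : necklaceSegment S a (b + 1) = necklaceSegment S a b ∪ S ⟨b + 1, hb⟩ := by
      ext v
      refine ⟨fun ⟨i, h₁, h₂, hv⟩ => ?_, ?_⟩
      · rcases Nat.lt_or_eq_of_le h₂ with h₂ | h₂
        · exact Or.inl ⟨i, h₁, by omega, hv⟩
        · obtain rfl : i = ⟨b + 1, hb⟩ := Fin.ext h₂
          exact Or.inr hv
      · rintro (⟨i, h₁, h₂, hv⟩ | hv)
        exacts [⟨i, h₁, by omega, hv⟩, ⟨_, show a ≤ b + 1 by omega, le_rfl, hv⟩]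
    obtain ⟨⟨u, v⟩, ⟨hu, hv, huv⟩, -⟩ := hN.2.2.2.1 ⟨b, by omega⟩ ⟨b + 1, hb⟩ rfl
    rw [hS]
    exact connected_induce_union (ih (by omega)).preconnected
      (hN.induce_connected hF _).preconnected ⟨_, hab, le_rfl, hu⟩ hv huv

variable (F G S) in
/-- Bead `i` is a copy of `F b` whose edge to the next bead leaves from `x` and whose edge
from the previous bead arrives at `y`. -/
def HasBeadType (i : Fin n) (b : κ) (x y : β b) : Prop :=
  ∃ g : F b ≃g G.induce (S i),
    (∃ j : Fin n, (j : ℕ) = i + 1 ∧ ∃ q ∈ S j, G.Adj (g x) q) ∧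
    (∃ j : Fin n, (i : ℕ) = j + 1 ∧ ∃ p ∈ S j, G.Adj p (g y))

theorem IsNecklaceWith.exists_hasBeadType (hN : IsNecklaceWith F G n S) {i : Fin n}
    (h₀ : 0 < (i : ℕ)) (h₁ : (i : ℕ) + 1 < n) : ∃ b x y, HasBeadType F G S i b x y := by
  obtain ⟨b, ⟨e⟩⟩ := hN.2.2.1 i
  obtain ⟨⟨u, v⟩, ⟨hu, hv, huv⟩, -⟩ := hN.2.2.2.1 i ⟨i + 1, h₁⟩ rfl
  obtain ⟨⟨u', v'⟩, ⟨hu', hv', huv'⟩, -⟩ :=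
    hN.2.2.2.1 ⟨i - 1, by omega⟩ i (by simp only; omega)
  exact ⟨b, e ⟨u, hu⟩, e ⟨v', hv'⟩, e.symm, ⟨_, rfl, v, hv, by simpa using huv⟩,
    ⟨_, by simp only; omega, u', hu', by simpa using huv'⟩⟩

theorem IsNecklaceWith.uniformNecklace_isMinorOf (hF : ∀ b, (F b).Connected)
    (hN : IsNecklaceWith F G n S) {b : κ} {x y : β b} {k : ℕ} (c : Fin (k + 1) → Fin n)
    (hgap : ∀ j : Fin k, (c j.castSucc : ℕ) + 1 < c j.succ)
    (htype : ∀ j : Fin k, HasBeadType F G S (c j.succ) b x y) :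
    IsMinorOf (uniformNecklace (F b) x y k) G := by
  choose g hnext hprev using htype
  have hc : StrictMono fun m => (c m : ℕ) :=
    Fin.strictMono_iff_lt_succ.mpr fun j => by have := hgap j; omega
  let T : Fin k → Set V := fun j => necklaceSegment S (c j.castSucc + 1) (c j.succ - 1)
  let φ : Fin k → β b → Set V := fun j w => insert (g j w : V) {v | w = y ∧ v ∈ T j}
  have hloc : ∀ {j w v}, v ∈ φ j w → ∃ i : Fin n, v ∈ S i ∧
      (i : ℕ) ∈ Set.Ioc (c j.castSucc : ℕ) (c j.succ) ∧
      ((i : ℕ) = c j.succ → v = g j w) ∧ ((i : ℕ) < c j.succ → w = y) := by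
    rintro j w v (rfl | ⟨rfl, i, h₁, h₂, hv⟩)
    · exact ⟨_, (g j w).2, ⟨by have := hgap j; omega, le_rfl⟩, fun _ => rfl, by omega⟩
    · exact ⟨i, hv, ⟨by omega, by omega⟩, by omega, fun _ => rfl⟩
  have hnext_mem : ∀ {j₁ j₂ : Fin k}, (j₂ : ℕ) = j₁ + 1 → ∃ q ∈ φ j₂ y, G.Adj (g j₁ x) q := by
    intro j₁ j₂ h
    obtain ⟨i, hi, q, hq, hxq⟩ := hnext j₁
    have hcs : j₂.castSucc = j₁.succ := Fin.ext (by simp [h])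
    have := hgap j₂
    rw [hcs] at this
    exact ⟨q, Or.inr ⟨rfl, i, by rw [hcs]; omega, by omega, hq⟩, hxq⟩
  refine ⟨fun p => φ p.1 p.2, ?_, ?_, ?_⟩
  · rintro ⟨j, w⟩
    show (G.induce (φ j w)).Connected
    by_cases hw : w = y
    · subst w
      obtain ⟨i, hi, p, hp, hpy⟩ := hprev j
      have hφ : φ j y = T j ∪ {(g j y : V)} := by
        ext v
        simp [φ, or_comm]
      have := hgap j
      rw [hφ]
      exact connected_induce_union
        (hN.induce_necklaceSegment_connected hF (by omega) (by omega)).preconnected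
        (G.induce_singleton_connected _).preconnected ⟨i, by omega, by omega, hp⟩ rfl hpy
    · have hφ : φ j w = {(g j w : V)} := by
        ext v
        simp [φ, hw]
      rw [hφ]
      exact G.induce_singleton_connected _
  · rintro ⟨j₁, w₁⟩ ⟨j₂, w₂⟩ hne
    refine Set.disjoint_left.mpr fun v (h₁ : v ∈ φ j₁ w₁) (h₂ : v ∈ φ j₂ w₂) => hne ?_
    obtain ⟨i₁, hv₁, hi₁, he₁, hl₁⟩ := hloc h₁
    obtain ⟨i₂, hv₂, hi₂, he₂, hl₂⟩ := hloc h₂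
    obtain rfl := hN.eq_of_mem hv₁ hv₂
    obtain rfl := hc.eq_of_mem_Ioc_castSucc_succ hi₁ hi₂
    rcases hi₁.2.eq_or_lt with h | h
    · exact congrArg _ ((g j₁).injective (Subtype.ext ((he₁ h).symm.trans (he₂ h))))
    · rw [hl₁ h, hl₂ h]
  · rintro ⟨j₁, w₁⟩ ⟨j₂, w₂⟩ h
    show ∃ u ∈ φ j₁ w₁, ∃ v ∈ φ j₂ w₂, G.Adj u v
    simp only [uniformNecklace_adj] at h
    rcases h with ⟨rfl, h⟩ | ⟨h, rfl, rfl⟩ | ⟨h, rfl, rfl⟩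
    · exact ⟨_, Set.mem_insert _ _, _, Set.mem_insert _ _, (g j₁).map_adj_iff.mpr h⟩
    · obtain ⟨q, hq, hxq⟩ := hnext_mem h
      exact ⟨_, Set.mem_insert _ _, q, hq, hxq⟩
    · obtain ⟨q, hq, hxq⟩ := hnext_mem h
      exact ⟨q, hq, _, Set.mem_insert _ _, hxq.symm⟩

end Necklace

theorem IsNecklaceWith.exists_uniformNecklace_isMinorOf {κ : Type} [Fintype κ] {β : κ → Type}
    [∀ b, Fintype (β b)] {F : ∀ b : κ, SimpleGraph (β b)} {V : Type} {G : SimpleGraph V} {n : ℕ}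
    {S : Fin n → Set V} (hF : ∀ b, (F b).Connected) (hN : IsNecklaceWith F G n S) {k : ℕ}
    (hn : 2 * (Fintype.card (Σ b, β b × β b) * k) + 2 < n) :
    ∃ b x y, IsMinorOf (uniformNecklace (F b) x y k) G := by
  set M := Fintype.card (Σ b, β b × β b) * k + 1
  -- only the odd-indexed beads are used, so that chosen beads are never adjacent
  let pos : Fin M → Fin n := fun m => ⟨2 * m + 1, by omega⟩
  have htype : ∀ m, ∃ τ : Σ b, β b × β b, HasBeadType F G S (pos m) τ.1 τ.2.1 τ.2.2 := fun m =>
    let ⟨b, x, y, h⟩ :=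
      hN.exists_hasBeadType (i := pos m) (by simp [pos]) (by simp only [pos]; omega)
    ⟨⟨b, x, y⟩, h⟩
  choose τ hτ using htype
  obtain ⟨τ₀, e, he⟩ := Fintype.exists_orderEmbedding_fiber τ (k := k) (by simp [M])
  refine ⟨τ₀.1, τ₀.2.1, τ₀.2.2,
    hN.uniformNecklace_isMinorOf hF (fun m => pos (e m)) (fun j => ?_)
      fun j => he j.succ ▸ hτ (e j.succ)⟩
  have : e j.castSucc < e j.succ := e.strictMono Fin.castSucc_lt_succ
  simp only [pos, Fin.lt_def] at this ⊢
  omega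

theorem stmt10 (κ : Type) [Fintype κ] (β : κ → Type) (instβ : ∀ i, Fintype (β i))
    (F : ∀ i : κ, SimpleGraph (β i)) (hFconn : ∀ i, (F i).Connected)
    (𝒢 : ∀ V : Type, SimpleGraph V → Prop)
    (hminor : ∀ (V W : Type) (G : SimpleGraph V) (H : SimpleGraph W),
      𝒢 V G → IsMinorOf H G → 𝒢 W H)
    (hlong : ∀ t : ℕ, ∃ (V : Type) (_ : Fintype V) (G : SimpleGraph V) (t' : ℕ),
      t ≤ t' ∧ 𝒢 V G ∧ IsNecklace F G t') :
    (∀ t : ℕ, ∃ (V : Type) (_ : Fintype V) (G : SimpleGraph V) (t' : ℕ),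
      t ≤ t' ∧ 𝒢 V G ∧ ∃ (b : κ) (x y : β b) (S : Fin t' → Set V),
        IsUniformNecklaceWith (F b) x y G t' S) ∧
    ∃ (b : κ) (x y : β b),
      ∀ (V : Type) (G : SimpleGraph V) (t : ℕ) (S : Fin t → Set V),
        IsUniformNecklaceWith (F b) x y G t S → 𝒢 V G := by
  have hmem : ∀ k, ∃ τ : Σ b, β b × β b, 𝒢 _ (uniformNecklace (F τ.1) τ.2.1 τ.2.2 k) := by
    intro k
    obtain ⟨V, -, G, n, hn, hG, S, hN⟩ := hlong (2 * (Fintype.card (Σ b, β b × β b) * k) + 3)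
    obtain ⟨b, x, y, hGk⟩ := hN.exists_uniformNecklace_isMinorOf hFconn (k := k) (by omega)
    exact ⟨⟨b, x, y⟩, hminor _ _ _ _ hG hGk⟩
  obtain ⟨τ, hb⟩ := Finite.exists_forall_of_antitone
    (P := fun k (τ : Σ b, β b × β b) => 𝒢 _ (uniformNecklace (F τ.1) τ.2.1 τ.2.2 k))
    (fun τ _ _ hkk' hG => hminor _ _ _ _ hG (uniformNecklace_isMinorOf_of_le hkk')) hmem
  obtain ⟨b, x, y⟩ := τ
  refine ⟨fun t => ⟨_, inferInstance, _, t, le_rfl, hb t, b, x, y, _,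
    isUniformNecklaceWith_uniformNecklace t⟩, b, x, y, fun V G t S hS => ?_⟩
  obtain ⟨e⟩ := hS.nonempty_iso
  exact hminor _ _ _ _ (hb t) e.symm.toEmbedding.isMinorOf
end

section
/- Let H be a biconnected graph and let G be a graph containing H as a minor. Then for every minimal minor model φ of H in G, the induced subgraph G[φ(V(H))] is biconnected; furthermore, G[φ(V(H))] is a minor of some biconnected component of G. -/
/-- A graph is biconnected if it is connected and remains connected after deleting any
single vertex. -/
def IsBiconnected {W : Type} (H : SimpleGraph W) : Prop :=
  H.Connected ∧ ∀ w : W, (H.induce {u : W | u ≠ w}).Connected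


/-!
Let `S = ⋃ w, φ w` and `v ∈ φ w₀`. If the component `C` of some vertex in `G[S] - v` met no
branch set other than `φ w₀`, it would lie inside `φ w₀` and could be cut from it: `φ w₀ \ C`
stays connected through `v`, and no edge leaves `C` except towards `v`, so a smaller model would
remain. Hence every component of `G[S] - v` reaches `⋃ w ≠ w₀, φ w`, which is connected because
`H - w₀` is. By finiteness `G[S]` lies in a maximal biconnected subgraph of `G`, which contains
it as a subgraph and hence as a minor.
-/

open Function Set

namespace SimpleGraph

section

variable {V W : Type*} {G : SimpleGraph V} {H : SimpleGraph W} {s t C : Set V} {a b c v : V}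

/-- Reachability in `G.induce s`, phrased on `V` to avoid subtypes. Note that `G.ReachIn s a a`
holds even when `a ∉ s`. -/
def ReachIn (G : SimpleGraph V) (s : Set V) : V → V → Prop :=
  Relation.ReflTransGen fun x y => x ∈ s ∧ y ∈ s ∧ G.Adj x y

namespace ReachIn

lemma mono (hst : s ⊆ t) (h : G.ReachIn s a b) : G.ReachIn t a b :=
  Relation.ReflTransGen.mono (fun _ _ hxy => ⟨hst hxy.1, hst hxy.2.1, hxy.2.2⟩) _ _ h

lemma trans (hab : G.ReachIn s a b) (hbc : G.ReachIn s b c) : G.ReachIn s a c :=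
  Relation.ReflTransGen.trans hab hbc

lemma symm (h : G.ReachIn s a b) : G.ReachIn s b a :=
  Relation.ReflTransGen.mono (fun _ _ hxy => ⟨hxy.2.1, hxy.1, hxy.2.2.symm⟩) _ _
    (Relation.ReflTransGen.swap _ _ h)

lemma mem (h : G.ReachIn s a b) (ha : a ∈ s) : b ∈ s := by
  induction h with
  | refl => exact ha
  | tail _ hstep _ => exact hstep.2.1

lemma avoid (hC : ∀ c ∈ C, ∀ z ∈ s, G.Adj c z → z ∈ C ∨ z = v) (h : G.ReachIn s a v)
    (ha : a ∉ C) : G.ReachIn (s \ C) a v := by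
  induction h using Relation.ReflTransGen.head_induction_on with
  | refl => exact .refl
  | @head x y hstep _ ih =>
    by_cases hy : y ∈ C
    · rcases hC y hy x hstep.1 hstep.2.2.symm with hx | rfl
      · exact absurd hx ha
      · exact .refl
    · exact .head ⟨⟨hstep.1, ha⟩, ⟨hstep.2.1, hy⟩, hstep.2.2⟩ (ih hy)

end ReachIn

lemma reachIn_iff_reachable (ha : a ∈ s) (hb : b ∈ s) :
    G.ReachIn s a b ↔ (G.induce s).Reachable ⟨a, ha⟩ ⟨b, hb⟩ := by
  rw [reachable_iff_reflTransGen]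
  refine ⟨fun h => ?_, fun h => Relation.ReflTransGen.lift Subtype.val
    (fun x y hxy => ⟨x.2, y.2, hxy⟩) _ _ h⟩
  induction h using Relation.ReflTransGen.head_induction_on with
  | refl => exact .refl
  | @head x y hstep _ ih =>
    exact .head (show (G.induce s).Adj ⟨x, ha⟩ ⟨y, hstep.2.1⟩ from hstep.2.2) (ih hstep.2.1)

lemma connected_induce_iff_reachIn :
    (G.induce s).Connected ↔ s.Nonempty ∧ ∀ a ∈ s, ∀ b ∈ s, G.ReachIn s a b := by
  rw [connected_iff, Set.nonempty_coe_sort, and_comm, Preconnected]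
  simp only [Subtype.forall, ← reachIn_iff_reachable]

lemma connected_induce_induce_iff {t : Set s} :
    ((G.induce s).induce t).Connected ↔ (G.induce (Subtype.val '' t)).Connected := by
  let f := (Embedding.induce (G := G) s).comp (Embedding.induce (G := G.induce s) t)
  have hf : Set.range f = Subtype.val '' t := by
    ext x
    constructor
    · rintro ⟨y, rfl⟩
      exact ⟨y, y.2, rfl⟩
    · rintro ⟨y, hy, rfl⟩
      exact ⟨⟨y, hy⟩, rfl⟩
  rw [f.isoInduceRange.connected_iff, hf]

lemma reachIn_iUnion_of_reachable {ψ : W → Set V}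
    (hψ : ∀ w, ∀ a ∈ ψ w, ∀ b ∈ ψ w, G.ReachIn (ψ w) a b)
    (hedge : ∀ w₁ w₂, H.Adj w₁ w₂ → ∃ x ∈ ψ w₁, ∃ y ∈ ψ w₂, G.Adj x y)
    {w₁ w₂ : W} (hw : H.Reachable w₁ w₂) :
    ∀ a ∈ ψ w₁, ∀ b ∈ ψ w₂, G.ReachIn (⋃ w, ψ w) a b := by
  obtain ⟨p⟩ := hw
  induction p with
  | nil => exact fun a ha b hb => (hψ _ a ha b hb).mono (subset_iUnion ψ _)
  | @cons u u' _ huu' _ ih =>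
    intro a ha b hb
    obtain ⟨x, hx, y, hy, hxy⟩ := hedge u u' huu'
    refine ((hψ u a ha x hx).mono (subset_iUnion ψ u)).trans (.head ?_ (ih y hy b hb))
    exact ⟨mem_iUnion_of_mem u hx, mem_iUnion_of_mem u' hy, hxy⟩

lemma connected_induce_iUnion {ψ : W → Set V} (hH : H.Connected)
    (hψ : ∀ w, (G.induce (ψ w)).Connected)
    (hedge : ∀ w₁ w₂, H.Adj w₁ w₂ → ∃ x ∈ ψ w₁, ∃ y ∈ ψ w₂, G.Adj x y) :
    (G.induce (⋃ w, ψ w)).Connected := by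
  simp only [connected_induce_iff_reachIn] at hψ ⊢
  obtain ⟨w⟩ := hH.nonempty
  refine ⟨(hψ w).1.mono (subset_iUnion ψ w), fun a ha b hb => ?_⟩
  obtain ⟨w₁, ha⟩ := mem_iUnion.1 ha
  obtain ⟨w₂, hb⟩ := mem_iUnion.1 hb
  exact reachIn_iUnion_of_reachable (fun w => (hψ w).2) hedge (hH w₁ w₂) a ha b hb

end

lemma isMinorOf_of_injective {V W : Type} {G : SimpleGraph V} {H : SimpleGraph W} (f : H →g G)
    (hf : Injective f) : IsMinorOf H G := by
  refine ⟨fun w => {f w}, fun w => ?_, fun w₁ w₂ hne => disjoint_singleton.2 (hf.ne hne),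
    fun w₁ w₂ h => ⟨_, rfl, _, rfl, f.map_adj h⟩⟩
  rw [induce_singleton_eq_top]
  exact connected_top

end SimpleGraph

namespace IsMinorModel

open SimpleGraph

variable {V W : Type} {G : SimpleGraph V} {H : SimpleGraph W} {φ : W → Set V} {w₀ : W}
  {v : V} {C : Set V}

lemma eq_of_mem (hφ : IsMinorModel G H φ) {w₁ w₂ : W} {x : V} (h₁ : x ∈ φ w₁)
    (h₂ : x ∈ φ w₂) : w₁ = w₂ :=
  by_contra fun hne => disjoint_left.1 (hφ.2.1 w₁ w₂ hne) h₁ h₂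

lemma update_sdiff_subset [DecidableEq W] (hφ : IsMinorModel G H φ) (hC : C ⊆ φ w₀) (w : W) :
    update φ w₀ (φ w₀ \ C) w ⊆ φ w \ C := by
  rcases eq_or_ne w w₀ with rfl | hw
  · rw [update_self]
  · rw [update_of_ne hw]
    exact fun y hy => ⟨hy, fun hyC => hw (hφ.eq_of_mem hy (hC hyC))⟩

lemma update_sdiff [DecidableEq W] (hφ : IsMinorModel G H φ) (hv : v ∈ φ w₀) (hvC : v ∉ C)
    (hC : C ⊆ φ w₀) (hclosed : ∀ c ∈ C, ∀ z ∈ ⋃ w, φ w, G.Adj c z → z ∈ C ∨ z = v) :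
    IsMinorModel G H (update φ w₀ (φ w₀ \ C)) := by
  have hsub w : update φ w₀ (φ w₀ \ C) w ⊆ φ w := (hφ.update_sdiff_subset hC w).trans sdiff_subset
  have hmem w x (hx : x ∈ φ w) (hxC : x ∉ C) : x ∈ update φ w₀ (φ w₀ \ C) w := by
    rcases eq_or_ne w w₀ with rfl | hw
    · rw [update_self]
      exact ⟨hx, hxC⟩
    · rwa [update_of_ne hw]
  have hout w₁ w₂ (hne : w₁ ≠ w₂) x (hx : x ∈ φ w₁) y (hy : y ∈ φ w₂) (hxy : G.Adj x y) :
      x ∉ C := fun hxC => by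
    have hy₀ : y ∈ φ w₀ := by
      rcases hclosed x hxC y (mem_iUnion_of_mem w₂ hy) hxy with hyC | rfl
      exacts [hC hyC, hv]
    exact hne ((hφ.eq_of_mem hx (hC hxC)).trans (hφ.eq_of_mem hy hy₀).symm)
  refine ⟨fun w => ?_, fun w₁ w₂ hne => (hφ.2.1 w₁ w₂ hne).mono (hsub w₁) (hsub w₂),
    fun w₁ w₂ h => ?_⟩
  · rcases eq_or_ne w w₀ with rfl | hw
    · rw [update_self, connected_induce_iff_reachIn]
      have hreach y (hy : y ∈ φ w \ C) : G.ReachIn (φ w \ C) y v :=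
        ((connected_induce_iff_reachIn.1 (hφ.1 w)).2 y hy.1 v hv).avoid
          (fun c hc z hz => hclosed c hc z (mem_iUnion_of_mem w hz)) hy.2
      exact ⟨⟨v, hv, hvC⟩, fun a ha b hb => (hreach a ha).trans (hreach b hb).symm⟩
    · rw [update_of_ne hw]
      exact hφ.1 w
  · obtain ⟨x, hx, y, hy, hxy⟩ := hφ.2.2 w₁ w₂ h
    exact ⟨x, hmem w₁ x hx (hout w₁ w₂ h.ne x hx y hy hxy),
      y, hmem w₂ y hy (hout w₂ w₁ h.ne.symm y hy x hx hxy.symm), hxy⟩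

lemma exists_reachIn_of_minimal (hφ : IsMinorModel G H φ)
    (hmin : ∀ φ' : W → Set V, IsMinorModel G H φ' → ¬ (⋃ w, φ' w) ⊂ ⋃ w, φ w)
    (hv : v ∈ φ w₀) {x : V} (hx : x ∈ (⋃ w, φ w) \ {v}) :
    ∃ w ≠ w₀, ∃ t ∈ φ w, G.ReachIn ((⋃ w, φ w) \ {v}) x t := by
  classical
  by_contra! hno
  set S := ⋃ w, φ w
  set C := {y | G.ReachIn (S \ {v}) x y}
  have hxC : x ∈ C := Relation.ReflTransGen.refl
  have hCS : C ⊆ S \ {v} := fun y hy => hy.mem hx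
  have hC : C ⊆ φ w₀ := by
    intro y hy
    obtain ⟨w, hyw⟩ := mem_iUnion.1 (hCS hy).1
    rcases eq_or_ne w w₀ with rfl | hw
    exacts [hyw, absurd hy (hno w hw y hyw)]
  have hclosed : ∀ c ∈ C, ∀ z ∈ S, G.Adj c z → z ∈ C ∨ z = v := by
    intro c hc z hz hcz
    by_cases hzv : z = v
    · exact .inr hzv
    · exact .inl (hc.tail ⟨hCS hc, ⟨hz, hzv⟩, hcz⟩)
  refine hmin _ (hφ.update_sdiff hv (fun hvC => (hCS hvC).2 rfl) hC hclosed) ?_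
  refine (iUnion_subset fun w => (hφ.update_sdiff_subset hC w).trans
    (sdiff_subset_sdiff_left (subset_iUnion φ w))).trans_ssubset ?_
  exact sdiff_ssubset_left_iff.2 ⟨x, hx.1, hxC⟩

lemma connected_induce_iUnion_sdiff_singleton (hφ : IsMinorModel G H φ) (hH : IsBiconnected H)
    (hmin : ∀ φ' : W → Set V, IsMinorModel G H φ' → ¬ (⋃ w, φ' w) ⊂ ⋃ w, φ w)
    (hv : v ∈ ⋃ w, φ w) : (G.induce ((⋃ w, φ w) \ {v})).Connected := by
  obtain ⟨w₀, hv₀⟩ := mem_iUnion.1 hv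
  set T := ⋃ u : {u : W | u ≠ w₀}, φ u
  have hT : (G.induce T).Connected :=
    connected_induce_iUnion (hH.2 w₀) (fun u => hφ.1 u) fun u₁ u₂ h => hφ.2.2 u₁ u₂ h
  have hTS : T ⊆ (⋃ w, φ w) \ {v} := iUnion_subset fun u y hy =>
    ⟨mem_iUnion_of_mem _ hy, fun hyv => u.2 (hφ.eq_of_mem hy (eq_of_mem_singleton hyv ▸ hv₀))⟩
  have hreach x (hx : x ∈ (⋃ w, φ w) \ {v}) : ∃ t ∈ T, G.ReachIn ((⋃ w, φ w) \ {v}) x t := by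
    obtain ⟨w, hw, t, ht, hxt⟩ := hφ.exists_reachIn_of_minimal hmin hv₀ hx
    exact ⟨t, mem_iUnion_of_mem ⟨w, hw⟩ ht, hxt⟩
  rw [connected_induce_iff_reachIn] at hT ⊢
  obtain ⟨⟨t, ht⟩, hTreach⟩ := hT
  refine ⟨⟨t, hTS ht⟩, fun a ha b hb => ?_⟩
  obtain ⟨ta, hta, hra⟩ := hreach a ha
  obtain ⟨tb, htb, hrb⟩ := hreach b hb
  exact hra.trans (((hTreach ta hta tb htb).mono hTS).trans hrb.symm)

lemma isBiconnected_induce_iUnion (hφ : IsMinorModel G H φ) (hH : IsBiconnected H)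
    (hmin : ∀ φ' : W → Set V, IsMinorModel G H φ' → ¬ (⋃ w, φ' w) ⊂ ⋃ w, φ w) :
    IsBiconnected (G.induce (⋃ w, φ w)) := by
  refine ⟨connected_induce_iUnion hH.1 hφ.1 hφ.2.2, fun v => ?_⟩
  have himage : Subtype.val '' {u : ⋃ w, φ w | u ≠ v} = (⋃ w, φ w) \ {v.1} := by
    ext x
    simp [Subtype.ext_iff, and_comm]
  rw [connected_induce_induce_iff, himage]
  exact hφ.connected_induce_iUnion_sdiff_singleton hH hmin v.2

end IsMinorModel

open SimpleGraph

theorem stmt11_general (V W : Type) [Fintype V]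
    (G : SimpleGraph V) (H : SimpleGraph W) (hH : IsBiconnected H)
    (φ : W → Set V) (hφ : IsMinorModel G H φ)
    (hmin : ∀ φ' : W → Set V, IsMinorModel G H φ' →
      ¬ (⋃ w : W, φ' w) ⊂ (⋃ w : W, φ w)) :
    IsBiconnected (G.induce (⋃ w : W, φ w)) ∧
    ∃ B : G.Subgraph, IsBiconnected B.coe ∧
      (∀ B' : G.Subgraph, B ≤ B' → IsBiconnected B'.coe → B' = B) ∧
      IsMinorOf (G.induce (⋃ w : W, φ w)) B.coe := by
  have hS := hφ.isBiconnected_induce_iUnion hH hmin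
  rw [induce_eq_coe_induce_top] at hS ⊢
  obtain ⟨B, hle, hB⟩ :=
    Finite.exists_le_maximal (p := fun B : G.Subgraph => IsBiconnected B.coe) hS
  exact ⟨hS, B, hB.1, fun B' hBB' hB' => hB.eq_of_ge hB' hBB',
    isMinorOf_of_injective (Subgraph.inclusion hle) (Subgraph.inclusion.injective hle)⟩

theorem stmt11 (V W : Type) [Fintype V] [Fintype W]
    (G : SimpleGraph V) (H : SimpleGraph W) (hH : IsBiconnected H)
    (φ : W → Set V) (hφ : IsMinorModel G H φ)
    (hmin : ∀ φ' : W → Set V, IsMinorModel G H φ' →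
      ¬ (⋃ w : W, φ' w) ⊂ (⋃ w : W, φ w)) :
    IsBiconnected (G.induce (⋃ w : W, φ w)) ∧
    ∃ B : G.Subgraph, IsBiconnected B.coe ∧
      (∀ B' : G.Subgraph, B ≤ B' → IsBiconnected B'.coe → B' = B) ∧
      IsMinorOf (G.induce (⋃ w : W, φ w)) B.coe :=
  stmt11_general V W G H hH φ hφ hmin
end

section
/- Let ℱ be a collection of connected graphs and let G be an ℱ-necklace. Then every biconnected component of G with at least three vertices is a subgraph of a bead of G. -/
lemma walkP {W : Type*} {H : SimpleGraph W} (P : W → Prop)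
    (hP : ∀ a b, H.Adj a b → P a → P b) :
    ∀ {a b : W}, H.Walk a b → P a → P b := by
  intro a b w
  induction w with
  | nil => exact id
  | cons h p ih => intro ha; exact ih (hP _ _ h ha)

lemma walkCross {W γ : Type*} {H : SimpleGraph W} (f : W → γ) :
    ∀ {a b : W}, H.Walk a b → f a ≠ f b → ∃ c d, H.Adj c d ∧ f c ≠ f d := by
  intro a b w
  induction w with
  | nil => intro h; exact absurd rfl h
  | @cons u c b h p ih =>
    intro hne
    by_cases h' : f u = f c
    · exact ih (h' ▸ hne)
    · exact ⟨u, c, h, h'⟩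

theorem stmt12 (V κ : Type) [Fintype V] (β : κ → Type)
    (F : ∀ i : κ, SimpleGraph (β i)) (hFconn : ∀ i, (F i).Connected)
    (G : SimpleGraph V) (t : ℕ) (S : Fin t → Set V)
    (hneck : IsNecklaceWith F G t S)
    (B : G.Subgraph) (hB : IsBiconnected B.coe)
    (hmax : ∀ B' : G.Subgraph, B ≤ B' → IsBiconnected B'.coe → B' = B)
    (hcard : 3 ≤ B.verts.ncard) :
    ∃ i : Fin t, B.verts ⊆ S i := by
  obtain ⟨hcover, hdisj, _, huniqedge, hnoedge⟩ := hneck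
  -- the bead index of a vertex
  have hidx : ∀ v : V, ∃ i, v ∈ S i := hcover
  set idx : V → Fin t := fun v => (hidx v).choose with hidxdef
  have hmem : ∀ v, v ∈ S (idx v) := fun v => (hidx v).choose_spec
  have hu : ∀ v i, v ∈ S i → idx v = i := by
    intro v i h
    by_contra hne
    exact Set.disjoint_left.mp (hdisj _ _ hne) (hmem v) h
  -- B is nonempty
  have hBne : B.verts.Nonempty := by
    rw [Set.nonempty_iff_ne_empty]
    intro h
    rw [h] at hcard
    simp [Set.ncard_empty] at hcard
  obtain ⟨v₀, hv₀⟩ := hBne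
  -- suffices: all vertices of B have the same index
  suffices hsame : ∀ u v : B.verts, idx u.val = idx v.val by
    refine ⟨idx v₀, fun v hv => ?_⟩
    have := hsame ⟨v, hv⟩ ⟨v₀, hv₀⟩
    rw [← this]
    exact hmem v
  by_contra hns
  push_neg at hns
  obtain ⟨u, v, huv⟩ := hns
  -- find a crossing edge of B
  obtain ⟨wuv⟩ := hB.1.preconnected u v
  obtain ⟨a, b, hab, habne⟩ := walkCross (fun w : B.verts => idx w.val) wuv huv
  -- WLOG idx a < idx b: package the contradiction argument
  have main : ∀ a b : B.verts, B.coe.Adj a b → ((idx a.val : ℕ) < (idx b.val : ℕ)) → False := by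
    intro a b hab hlt
    have hGab : G.Adj a.val b.val := B.adj_sub hab
    set k : ℕ := (idx a.val : ℕ) with hk
    -- idx b = k + 1
    have hb1 : (idx b.val : ℕ) = k + 1 := by
      by_contra h
      have : k + 1 < (idx b.val : ℕ) := by omega
      exact hnoedge _ _ this _ (hmem a.val) _ (hmem b.val) hGab
    obtain ⟨p, hp, hup⟩ := huniqedge (idx a.val) (idx b.val) (by omega)
    have hpab : p = (a.val, b.val) :=
      (hup (a.val, b.val) ⟨hmem a.val, hmem b.val, hGab⟩).symm
    -- key uniqueness: any G-edge crossing the cut between beads ≤ k and ≥ k+1 is (a,b)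
    have key : ∀ c d : V, G.Adj c d → (idx c : ℕ) ≤ k → k + 1 ≤ (idx d : ℕ) →
        c = a.val ∧ d = b.val := by
      intro c d hcd hc hd
      have hd1 : (idx d : ℕ) = (idx c : ℕ) + 1 := by
        by_contra h
        have : (idx c : ℕ) + 1 < (idx d : ℕ) := by
          rcases lt_or_ge ((idx c : ℕ) + 1) (idx d : ℕ) with h' | h'
          · exact h'
          · omega
        exact hnoedge _ _ this _ (hmem c) _ (hmem d) hcd
      have hck : (idx c : ℕ) = k := by omega
      have hci : idx c = idx a.val := Fin.val_injective hck
      have hdi : idx d = idx b.val := Fin.val_injective (by omega)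
      have := hup (c, d) ⟨hci ▸ hmem c, hdi ▸ hmem d, hcd⟩
      rw [hpab] at this
      exact ⟨congrArg Prod.fst this, congrArg Prod.snd this⟩
    by_cases hz : ∃ z ∈ B.verts, z ≠ a.val ∧ (idx z : ℕ) ≤ k
    · -- delete a: left side (z) and right side (b) get disconnected
      obtain ⟨z, hzB, hza, hzk⟩ := hz
      have hba : b ≠ a := by
        intro h
        have h2 : (idx b.val : ℕ) = (idx a.val : ℕ) := by rw [h]
        omega
      have hconn := hB.2 a
      set z' : {u : B.verts | u ≠ a} := ⟨⟨z, hzB⟩, fun h => hza (congrArg Subtype.val h)⟩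
      set b' : {u : B.verts | u ≠ a} := ⟨b, hba⟩
      obtain ⟨hreach⟩ := hconn.preconnected z' b'
      have := walkP (H := B.coe.induce {u : B.verts | u ≠ a})
        (fun w => (idx w.val.val : ℕ) ≤ k) ?_ hreach hzk
      · simp only [b'] at this; omega
      · intro c d hcd hc
        by_contra hdk
        have hGcd : G.Adj c.val.val d.val.val := B.adj_sub hcd
        have := (key _ _ hGcd hc (by omega)).1
        exact c.prop (Subtype.ext this)
    · -- every B-vertex other than a is on the right; delete b instead
      push_neg at hz
      -- third vertex
      have hne_ab : a.val ≠ b.val := by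
        intro h
        have h2 : (idx a.val : ℕ) = (idx b.val : ℕ) := by rw [h]
        omega
      have h3 : (B.verts \ {a.val, b.val}).Nonempty := by
        rw [Set.nonempty_iff_ne_empty]
        intro h
        rw [Set.diff_eq_empty] at h
        have h1 := Set.ncard_le_ncard h (Set.toFinite _)
        rw [Set.ncard_pair hne_ab] at h1
        omega
      obtain ⟨z, hzB, hzab⟩ := h3
      simp only [Set.mem_insert_iff, Set.mem_singleton_iff, not_or] at hzab
      have hzk : k + 1 ≤ (idx z : ℕ) := by
        have := hz z hzB hzab.1
        omega
      have hconn := hB.2 b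
      have hab' : (⟨a.val, a.prop⟩ : B.verts) ≠ b := fun h => hne_ab (congrArg Subtype.val h)
      set a' : {u : B.verts | u ≠ b} := ⟨a, fun h => hne_ab (congrArg Subtype.val h)⟩
      set z' : {u : B.verts | u ≠ b} := ⟨⟨z, hzB⟩, fun h => hzab.2 (congrArg Subtype.val h)⟩
      obtain ⟨hreach⟩ := hconn.preconnected a' z'
      have := walkP (H := B.coe.induce {u : B.verts | u ≠ b})
        (fun w => (idx w.val.val : ℕ) ≤ k) ?_ hreach (le_of_eq rfl)
      · simp only [z'] at this; omega
      · intro c d hcd hc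
        by_contra hdk
        have hGcd : G.Adj c.val.val d.val.val := B.adj_sub hcd
        have := (key _ _ hGcd hc (by omega)).2
        exact d.prop (Subtype.ext this)
  rcases lt_trichotomy ((idx a.val : ℕ)) ((idx b.val : ℕ)) with h | h | h
  · exact main a b hab h
  · exact habne (Fin.val_injective h)
  · exact main b a hab.symm h
end

section
/- Let ℱ be a collection of connected graphs, let G be an ℱ-necklace, and let ℋ be a collection of biconnected graphs each having at least three vertices. If no graph in ℱ contains a graph of ℋ as a minor, then G contains no graph of ℋ as a minor. -/
section Helpers

open SimpleGraph

variable {V : Type} {G : SimpleGraph V}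

/-- If the only edge from `A` to `B` is `(a,b)`, a connected set `C ⊆ A ∪ B` meeting
both `A` and `B` contains both `a` and `b`. -/
lemma cut_mem_of_cross {A B C : Set V} {a b : V}
    (hcross : ∀ x y, x ∈ A → y ∈ B → G.Adj x y → x = a ∧ y = b)
    (hCAB : C ⊆ A ∪ B) (hAB : Disjoint A B)
    (hC : (G.induce C).Connected) {u v : V} (hu : u ∈ C) (hv : v ∈ C)
    (hua : u ∈ A) (hvb : v ∈ B) : a ∈ C ∧ a ∈ A ∧ b ∈ C ∧ b ∈ B := by
  obtain ⟨p⟩ := hC.preconnected ⟨u, hu⟩ ⟨v, hv⟩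
  obtain ⟨d, _, hdf, hds⟩ := p.exists_boundary_dart {x : C | (x : V) ∈ A} hua
    (fun h => Set.disjoint_left.mp hAB h hvb)
  have hsndB : (d.snd : V) ∈ B := (hCAB d.snd.2).resolve_left hds
  obtain ⟨ha, hb⟩ := hcross _ _ hdf hsndB d.adj
  exact ⟨ha ▸ d.fst.2, ha ▸ hdf, hb ▸ d.snd.2, hb ▸ hsndB⟩

lemma restrict_reach {A B C : Set V} {a b : V}
    (hcross : ∀ x y, x ∈ A → y ∈ B → G.Adj x y → x = a ∧ y = b)
    (hCAB : C ⊆ A ∪ B) (hAB : Disjoint A B) :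
    ∀ n : ℕ, ∀ u v : C, ∀ hua : (u : V) ∈ A, ∀ hva : (v : V) ∈ A,
      ∀ p : (G.induce C).Walk u v, p.length ≤ n →
      (G.induce (C ∩ A)).Reachable ⟨u, u.2, hua⟩ ⟨v, v.2, hva⟩ := by
  intro n
  induction n with
  | zero =>
    intro u v hua hva p hp
    cases p with
    | nil => exact SimpleGraph.Reachable.refl _
    | cons h q => simp [SimpleGraph.Walk.length_cons] at hp
  | succ n ih =>
    intro u v hua hva p hp
    haveI : DecidableEq ↥C := Classical.decEq _
    cases p with
    | nil => exact SimpleGraph.Reachable.refl _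
    | @cons _ w _ h q =>
      rw [SimpleGraph.Walk.length_cons] at hp
      by_cases hwA : (w : V) ∈ A
      · have hadj : (G.induce (C ∩ A)).Adj ⟨u, u.2, hua⟩ ⟨w, w.2, hwA⟩ := h
        exact hadj.reachable.trans (ih w v hwA hva q (by omega))
      · have hwB : (w : V) ∈ B := (hCAB w.2).resolve_left hwA
        obtain ⟨hua', hwb'⟩ := hcross _ _ hua hwB h
        obtain ⟨d, hd, hdf, hds⟩ := q.exists_boundary_dart {x : C | (x : V) ∈ B} hwB
          (fun hc => Set.disjoint_left.mp hAB hva hc)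
        have hsA : (d.snd : V) ∈ A := (hCAB d.snd.2).resolve_right hds
        obtain ⟨hsa, hfb⟩ := hcross _ _ hsA hdf d.adj.symm
        have he : d.snd = u := Subtype.ext (by rw [hsa, hua'])
        have hsup : d.snd ∈ q.support := SimpleGraph.Walk.dart_snd_mem_support_of_mem_darts q hd
        have hlen := SimpleGraph.Walk.length_dropUntil_le q hsup
        subst he
        exact ih d.snd v hsA hva (q.dropUntil d.snd hsup) (by omega)

/-- Restriction of a connected set to one side of a one-edge cut stays connected. -/
lemma restrict_conn {A B C : Set V} {a b : V}
    (hcross : ∀ x y, x ∈ A → y ∈ B → G.Adj x y → x = a ∧ y = b)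
    (hCAB : C ⊆ A ∪ B) (hAB : Disjoint A B)
    (hC : (G.induce C).Connected) {u : V} (hu : u ∈ C) (hua : u ∈ A) :
    (G.induce (C ∩ A)).Connected := by
  have hpre : (G.induce (C ∩ A)).Preconnected := by
    intro x y
    obtain ⟨p⟩ := hC.preconnected ⟨x.val, x.2.1⟩ ⟨y.val, y.2.1⟩
    exact restrict_reach hcross hCAB hAB p.length ⟨x.val, x.2.1⟩ ⟨y.val, y.2.1⟩
      x.2.2 y.2.2 p le_rfl
  haveI : Nonempty ↥(C ∩ A) := ⟨⟨u, hu, hua⟩⟩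
  exact ⟨hpre⟩

end Helpers
open SimpleGraph in
/-- A minor model confined to a set `S` transports through an isomorphism
`G.induce S ≃g Q` to give a minor in `Q`. -/
lemma minor_of_confined {V W X : Type} {G : SimpleGraph V} {H : SimpleGraph W}
    {Q : SimpleGraph X} {S : Set V} (e : G.induce S ≃g Q) {φ : W → Set V}
    (hm : IsMinorModel G H φ) (hsub : ∀ w, φ w ⊆ S) : IsMinorOf H Q := by
  obtain ⟨hconn, hdisj, hedge⟩ := hm
  refine ⟨fun w => {z | ((e.symm z : ↥S) : V) ∈ φ w}, ?_, ?_, ?_⟩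
  · intro w
    have hmem : ∀ x : ↥(φ w), (e ⟨x.val, hsub w x.2⟩ : X) ∈
        {z | ((e.symm z : ↥S) : V) ∈ φ w} := by
      intro x
      simp only [Set.mem_setOf_eq, RelIso.symm_apply_apply]
      exact x.2
    let eqv : ↥(φ w) ≃ ↥{z | ((e.symm z : ↥S) : V) ∈ φ w} :=
      { toFun := fun x => ⟨e ⟨x.val, hsub w x.2⟩, hmem x⟩
        invFun := fun z => ⟨((e.symm z.val : ↥S) : V), z.2⟩
        left_inv := fun x => by apply Subtype.ext; simp
        right_inv := fun z => by apply Subtype.ext; simp }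
    have iso : G.induce (φ w) ≃g Q.induce {z | ((e.symm z : ↥S) : V) ∈ φ w} :=
      { eqv with
        map_rel_iff' := @fun x y => e.map_adj_iff }
    exact iso.connected_iff.mp (hconn w)
  · intro w₁ w₂ hne
    rw [Set.disjoint_left]
    intro z hz1 hz2
    exact Set.disjoint_left.mp (hdisj _ _ hne) hz1 hz2
  · intro w₁ w₂ ha
    obtain ⟨x, hx, y, hy, hxy⟩ := hedge w₁ w₂ ha
    refine ⟨e ⟨x, hsub _ hx⟩, ?_, e ⟨y, hsub _ hy⟩, ?_, ?_⟩
    · simp only [Set.mem_setOf_eq, RelIso.symm_apply_apply]; exact hx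
    · simp only [Set.mem_setOf_eq, RelIso.symm_apply_apply]; exact hy
    · exact e.map_adj_iff.mpr hxy
theorem stmt13 (V κ κ' : Type) [Fintype V] (β : κ → Type) (γ : κ' → Type)
    (F : ∀ i : κ, SimpleGraph (β i)) (hFconn : ∀ i, (F i).Connected)
    (Hs : ∀ j : κ', SimpleGraph (γ j))
    (hbic : ∀ j, IsBiconnected (Hs j))
    (hthree : ∀ j, ∃ a b c : γ j, a ≠ b ∧ a ≠ c ∧ b ≠ c)
    (G : SimpleGraph V) (t : ℕ) (hneck : IsNecklace F G t)
    (hfree : ∀ i j, ¬ IsMinorOf (Hs j) (F i)) :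
    ∀ j, ¬ IsMinorOf (Hs j) G := by
  obtain ⟨S, hpart, hSdisj, hiso, huniq, hfar⟩ := hneck
  intro j hmin
  obtain ⟨φ₀, hφ₀⟩ := hmin
  obtain ⟨wa0, wb0, wc0, h3ab, h3ac, h3bc⟩ := hthree j
  set U : ℕ → Set V := fun n => {v | ∃ i : Fin t, v ∈ S i ∧ (i : ℕ) < n} with hU
  suffices claim : ∀ n, ∀ ψ : γ j → Set V, IsMinorModel G (Hs j) ψ →
      ¬ (∀ w, ψ w ⊆ U n) by
    refine claim t φ₀ hφ₀ (fun w v _ => ?_)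
    obtain ⟨i, hi⟩ := hpart v
    exact ⟨i, hi, i.isLt⟩
  intro n
  induction n with
  | zero =>
    intro ψ hψ hsub
    obtain ⟨⟨x, hx⟩⟩ := (hψ.1 wa0).nonempty
    obtain ⟨i, _, hi⟩ := hsub wa0 hx
    omega
  | succ n ih =>
    intro ψ hψ hsub
    by_cases hnt : n < t
    swap
    · refine ih ψ hψ (fun w v hv => ?_)
      obtain ⟨i, hvi, _⟩ := hsub w hv
      exact ⟨i, hvi, by omega⟩
    have hconn := hψ.1
    have hdisj := hψ.2.1
    have hedge := hψ.2.2
    have hne : ∀ w, (ψ w).Nonempty := by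
      intro w
      obtain ⟨⟨x, hx⟩⟩ := (hconn w).nonempty
      exact ⟨x, hx⟩
    set A : Set V := U n with hA
    set B : Set V := S ⟨n, hnt⟩ with hB
    have hABd : Disjoint A B := by
      rw [Set.disjoint_left]
      rintro v ⟨i, hvi, hin⟩ hvB
      have hineq : i ≠ ⟨n, hnt⟩ := by
        intro h
        rw [h] at hin
        simp at hin
      exact Set.disjoint_left.mp (hSdisj i ⟨n, hnt⟩ hineq) hvi hvB
    have hUsub : ∀ w, ψ w ⊆ A ∪ B := by
      intro w v hv
      obtain ⟨i, hvi, hin⟩ := hsub w hv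
      rcases Nat.lt_or_ge (i : ℕ) n with h | h
      · exact Or.inl ⟨i, hvi, h⟩
      · have hieq : i = ⟨n, hnt⟩ := Fin.ext (show (i : ℕ) = n by omega)
        exact Or.inr ((hieq ▸ hvi : v ∈ S ⟨n, hnt⟩))
    have hcrossEx : ∃ a b : V, ∀ x y, x ∈ A → y ∈ B → G.Adj x y → x = a ∧ y = b := by
      rcases Nat.eq_zero_or_pos n with hn0 | hn
      · obtain ⟨v₀, _⟩ := hne wa0
        refine ⟨v₀, v₀, ?_⟩
        rintro x y ⟨i, _, hi⟩ _ _
        omega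
      · obtain ⟨p, hp, hup⟩ := huniq ⟨n - 1, by omega⟩ ⟨n, hnt⟩ (by simp; omega)
        refine ⟨p.1, p.2, ?_⟩
        intro x y hxA hyB hadj
        obtain ⟨i, hxi, hin⟩ := hxA
        have hi1 : (i : ℕ) + 1 = n := by
          by_contra hne'
          exact hfar i ⟨n, hnt⟩ (show (i : ℕ) + 1 < n by omega) x hxi y hyB hadj
        have hieq : i = ⟨n - 1, by omega⟩ := Fin.ext (show (i : ℕ) = n - 1 by omega)
        have hq := hup (x, y) ⟨hieq ▸ hxi, hyB, hadj⟩
        exact ⟨congrArg Prod.fst hq, congrArg Prod.snd hq⟩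
    obtain ⟨a, b, hcross⟩ := hcrossEx
    have hcross' : ∀ x y, x ∈ B → y ∈ A → G.Adj x y → x = b ∧ y = a := by
      intro x y hx hy hxy
      obtain ⟨h1, h2⟩ := hcross y x hy hx hxy.symm
      exact ⟨h2, h1⟩
    have hnotA : ∀ w', ψ w' ⊆ B → ¬ ψ w' ⊆ A := by
      intro w' hBx hAx
      obtain ⟨y, hy⟩ := hne w'
      exact Set.disjoint_left.mp hABd (hAx hy) (hBx hy)
    have hnotB : ∀ w', ψ w' ⊆ A → ¬ ψ w' ⊆ B := by
      intro w' hAx hBx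
      obtain ⟨y, hy⟩ := hne w'
      exact Set.disjoint_left.mp hABd (hAx hy) (hBx hy)
    have hclass : ∀ w, ¬ ((ψ w ∩ A).Nonempty ∧ (ψ w ∩ B).Nonempty) →
        ψ w ⊆ A ∨ ψ w ⊆ B := by
      intro w hw
      by_cases hA' : (ψ w ∩ A).Nonempty
      · left
        intro v hv
        rcases hUsub w hv with h | h
        · exact h
        · exact absurd ⟨hA', ⟨v, hv, h⟩⟩ hw
      · right
        intro v hv
        rcases hUsub w hv with h | h
        · exact absurd ⟨v, hv, h⟩ hA'
        · exact h
    have hrealize : ∀ w₁ w₂, (Hs j).Adj w₁ w₂ → ψ w₁ ⊆ A → ψ w₂ ⊆ B →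
        a ∈ ψ w₁ ∧ b ∈ ψ w₂ := by
      intro w₁ w₂ hadj h1 h2
      obtain ⟨x, hx, y, hy, hxy⟩ := hedge w₁ w₂ hadj
      obtain ⟨hxa, hyb⟩ := hcross x y (h1 hx) (h2 hy) hxy
      exact ⟨hxa ▸ hx, hyb ▸ hy⟩
    -- bead contradiction helper
    have hbead : ∀ ψ' : γ j → Set V, IsMinorModel G (Hs j) ψ' → (∀ w, ψ' w ⊆ B) → False := by
      intro ψ' hm hsub'
      obtain ⟨bk, ⟨e⟩⟩ := hiso ⟨n, hnt⟩
      exact hfree bk j (minor_of_confined e hm hsub')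
    by_cases hcr : ∃ w, (ψ w ∩ A).Nonempty ∧ (ψ w ∩ B).Nonempty
    · obtain ⟨w, ⟨xA, hxAC, hxAA⟩, ⟨xB, hxBC, hxBB⟩⟩ := hcr
      obtain ⟨haC, haA, hbC, hbB⟩ :=
        cut_mem_of_cross hcross (hUsub w) hABd (hconn w) hxAC hxBC hxAA hxBB
      have hside : ∀ w', w' ≠ w → ψ w' ⊆ A ∨ ψ w' ⊆ B := by
        intro w' hww
        refine hclass w' ?_
        rintro ⟨⟨x1, hx1, hx1A⟩, ⟨x2, hx2, hx2B⟩⟩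
        obtain ⟨haC', _, _, _⟩ :=
          cut_mem_of_cross hcross (hUsub w') hABd (hconn w') hx1 hx2 hx1A hx2B
        exact Set.disjoint_left.mp (hdisj w' w hww) haC' haC
      by_cases hmix : (∃ w₁, w₁ ≠ w ∧ ψ w₁ ⊆ A) ∧ (∃ w₂, w₂ ≠ w ∧ ψ w₂ ⊆ B)
      · obtain ⟨⟨w₁, hw1, h1A⟩, ⟨w₂, hw2, h2B⟩⟩ := hmix
        obtain ⟨p⟩ := ((hbic j).2 w).preconnected ⟨w₁, hw1⟩ ⟨w₂, hw2⟩
        obtain ⟨d, _, hdf, hds⟩ :=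
          p.exists_boundary_dart {x : {u : γ j | u ≠ w} | ψ (x : γ j) ⊆ A} h1A (hnotA _ h2B)
        have hsB : ψ (d.snd : γ j) ⊆ B := (hside d.snd.val d.snd.2).resolve_left hds
        obtain ⟨haIn, _⟩ := hrealize d.fst.val d.snd.val d.adj hdf hsB
        exact Set.disjoint_left.mp (hdisj _ w d.fst.2) haIn haC
      · rw [not_and_or] at hmix
        rcases hmix with hnoA | hnoB
        · -- all other branch sets inside B; restrict ψ w to B and use the bead
          have hallB : ∀ w', w' ≠ w → ψ w' ⊆ B := by
            intro w' hww
            rcases hside w' hww with h | h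
            · exact absurd ⟨w', hww, h⟩ hnoA
            · exact h
          classical
          obtain ⟨ψ', hψ'def⟩ : ∃ ψ' : γ j → Set V,
              ∀ w'', ψ' w'' = if w'' = w then ψ w ∩ B else ψ w'' := ⟨_, fun _ => rfl⟩
          have hsubψ : ∀ w'', ψ' w'' ⊆ ψ w'' := by
            intro w''
            rw [hψ'def w'']
            by_cases h : w'' = w
            · rw [if_pos h, h]; exact Set.inter_subset_left
            · rw [if_neg h]
          have hmodel : IsMinorModel G (Hs j) ψ' := by
            refine ⟨?_, ?_, ?_⟩
            · intro w''
              by_cases h : w'' = w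
              · rw [hψ'def w'', if_pos h]
                exact restrict_conn hcross' (fun v hv => Or.symm (hUsub w hv)) hABd.symm
                  (hconn w) hbC hbB
              · rw [hψ'def w'', if_neg h]
                exact hconn w''
            · intro w₁ w₂ hne'
              exact (hdisj w₁ w₂ hne').mono (hsubψ w₁) (hsubψ w₂)
            · intro w₁ w₂ hadj
              obtain ⟨x, hx, y, hy, hxy⟩ := hedge w₁ w₂ hadj
              have hxmem : x ∈ ψ' w₁ := by
                rw [hψ'def w₁]
                by_cases h : w₁ = w
                · rw [if_pos h]
                  subst h
                  refine ⟨hx, ?_⟩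
                  by_contra hxB
                  have hxA : x ∈ A := (hUsub w₁ hx).resolve_right hxB
                  have h2 : ψ w₂ ⊆ B := hallB w₂ hadj.ne.symm
                  obtain ⟨hxa, hyb⟩ := hcross x y hxA (h2 hy) hxy
                  exact Set.disjoint_left.mp (hdisj w₂ w₁ hadj.ne.symm) (hyb ▸ hy) hbC
                · rw [if_neg h]; exact hx
              have hymem : y ∈ ψ' w₂ := by
                rw [hψ'def w₂]
                by_cases h : w₂ = w
                · rw [if_pos h]
                  subst h
                  refine ⟨hy, ?_⟩
                  by_contra hyB
                  have hyA : y ∈ A := (hUsub w₂ hy).resolve_right hyB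
                  have h1 : ψ w₁ ⊆ B := hallB w₁ hadj.ne
                  obtain ⟨hxb, hya⟩ := hcross' x y (h1 hx) hyA hxy
                  exact Set.disjoint_left.mp (hdisj w₁ w₂ hadj.ne) (hxb ▸ hx) hbC
                · rw [if_neg h]; exact hy
              exact ⟨x, hxmem, y, hymem, hxy⟩
          refine hbead ψ' hmodel ?_
          intro w''
          rw [hψ'def w'']
          by_cases h : w'' = w
          · rw [if_pos h]; exact Set.inter_subset_right
          · rw [if_neg h]; exact hallB w'' h
        · -- all other branch sets inside A; restrict ψ w to A and use induction
          have hallA : ∀ w', w' ≠ w → ψ w' ⊆ A := by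
            intro w' hww
            rcases hside w' hww with h | h
            · exact h
            · exact absurd ⟨w', hww, h⟩ hnoB
          classical
          obtain ⟨ψ', hψ'def⟩ : ∃ ψ' : γ j → Set V,
              ∀ w'', ψ' w'' = if w'' = w then ψ w ∩ A else ψ w'' := ⟨_, fun _ => rfl⟩
          have hsubψ : ∀ w'', ψ' w'' ⊆ ψ w'' := by
            intro w''
            rw [hψ'def w'']
            by_cases h : w'' = w
            · rw [if_pos h, h]; exact Set.inter_subset_left
            · rw [if_neg h]
          have hmodel : IsMinorModel G (Hs j) ψ' := by
            refine ⟨?_, ?_, ?_⟩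
            · intro w''
              by_cases h : w'' = w
              · rw [hψ'def w'', if_pos h]
                exact restrict_conn hcross (hUsub w) hABd (hconn w) haC haA
              · rw [hψ'def w'', if_neg h]
                exact hconn w''
            · intro w₁ w₂ hne'
              exact (hdisj w₁ w₂ hne').mono (hsubψ w₁) (hsubψ w₂)
            · intro w₁ w₂ hadj
              obtain ⟨x, hx, y, hy, hxy⟩ := hedge w₁ w₂ hadj
              have hxmem : x ∈ ψ' w₁ := by
                rw [hψ'def w₁]
                by_cases h : w₁ = w
                · rw [if_pos h]
                  subst h
                  refine ⟨hx, ?_⟩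
                  by_contra hxA
                  have hxB : x ∈ B := (hUsub w₁ hx).resolve_left hxA
                  have h2 : ψ w₂ ⊆ A := hallA w₂ hadj.ne.symm
                  obtain ⟨hxb, hya⟩ := hcross' x y hxB (h2 hy) hxy
                  exact Set.disjoint_left.mp (hdisj w₂ w₁ hadj.ne.symm) (hya ▸ hy) haC
                · rw [if_neg h]; exact hx
              have hymem : y ∈ ψ' w₂ := by
                rw [hψ'def w₂]
                by_cases h : w₂ = w
                · rw [if_pos h]
                  subst h
                  refine ⟨hy, ?_⟩
                  by_contra hyA
                  have hyB : y ∈ B := (hUsub w₂ hy).resolve_left hyA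
                  have h1 : ψ w₁ ⊆ A := hallA w₁ hadj.ne
                  obtain ⟨hxa, hyb⟩ := hcross x y (h1 hx) hyB hxy
                  exact Set.disjoint_left.mp (hdisj w₁ w₂ hadj.ne) (hxa ▸ hx) haC
                · rw [if_neg h]; exact hy
              exact ⟨x, hxmem, y, hymem, hxy⟩
          refine ih ψ' hmodel ?_
          intro w''
          rw [hψ'def w'']
          by_cases h : w'' = w
          · rw [if_pos h]; exact Set.inter_subset_right
          · rw [if_neg h]; exact hallA w'' h
    · -- no crossing branch set
      have hside : ∀ w', ψ w' ⊆ A ∨ ψ w' ⊆ B := fun w' =>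
        hclass w' (fun hc => hcr ⟨w', hc⟩)
      by_cases hallA : ∀ w', ψ w' ⊆ A
      · exact ih ψ hψ hallA
      by_cases hallB : ∀ w', ψ w' ⊆ B
      · exact hbead ψ hψ hallB
      push_neg at hallA hallB
      obtain ⟨wB, hwB⟩ := hallA
      obtain ⟨wA, hwA⟩ := hallB
      have hwAA : ψ wA ⊆ A := (hside wA).resolve_right hwA
      obtain ⟨p⟩ := (hbic j).1.preconnected wA wB
      obtain ⟨d, _, hdf, hds⟩ := p.exists_boundary_dart {w' | ψ w' ⊆ A} hwAA hwB
      have h2B : ψ d.snd ⊆ B := (hside d.snd).resolve_left hds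
      obtain ⟨haIn, hbIn⟩ := hrealize d.fst d.snd d.adj hdf h2B
      have hw12 : d.fst ≠ d.snd := d.adj.ne
      have hthird : ∃ w₃, w₃ ≠ d.fst ∧ w₃ ≠ d.snd := by
        by_contra h
        push_neg at h
        have hmem : ∀ u : γ j, u = d.fst ∨ u = d.snd := by
          intro u
          by_cases hu : u = d.fst
          · exact Or.inl hu
          · exact Or.inr (h u hu)
        rcases hmem wa0 with h1 | h1 <;> rcases hmem wb0 with h2 | h2 <;>
          rcases hmem wc0 with h3 | h3 <;>
          first
            | exact h3ab (h1.trans h2.symm)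
            | exact h3ac (h1.trans h3.symm)
            | exact h3bc (h2.trans h3.symm)
      obtain ⟨w₃, hw31, hw32⟩ := hthird
      rcases hside w₃ with h3A | h3B
      · obtain ⟨p'⟩ := ((hbic j).2 d.fst).preconnected ⟨w₃, hw31⟩ ⟨d.snd, hw12.symm⟩
        obtain ⟨d', _, hdf', hds'⟩ :=
          p'.exists_boundary_dart {x : {u : γ j | u ≠ d.fst} | ψ (x : γ j) ⊆ A} h3A
            (hnotA _ h2B)
        have hsB' : ψ (d'.snd : γ j) ⊆ B := (hside d'.snd.val).resolve_left hds'
        obtain ⟨haIn', _⟩ := hrealize d'.fst.val d'.snd.val d'.adj hdf' hsB'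
        exact Set.disjoint_left.mp (hdisj _ _ d'.fst.2) haIn' haIn
      · obtain ⟨p'⟩ := ((hbic j).2 d.snd).preconnected ⟨d.fst, hw12⟩ ⟨w₃, hw32⟩
        obtain ⟨d', _, hdf', hds'⟩ :=
          p'.exists_boundary_dart {x : {u : γ j | u ≠ d.snd} | ψ (x : γ j) ⊆ A} hdf
            (hnotA _ h3B)
        have hsB' : ψ (d'.snd : γ j) ⊆ B := (hside d'.snd.val).resolve_left hds'
        obtain ⟨_, hbIn'⟩ := hrealize d'.fst.val d'.snd.val d'.adj hdf' hsB'
        exact Set.disjoint_left.mp (hdisj _ _ d'.snd.2) hbIn' hbIn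
end
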